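/- arXiv:2111.02734 — 6 statements merged into one kernel-verified Lean document; each statement's English description precedes it below -/
import Mathlib

section
/- Let t > 2 be an integer and let G be a finite connected simple graph with n vertices, m edges (m ≥ 1), minimum degree δ(G) and spectral radius ρ(G). Then k_t(G) ≤ (2m − ρ(G) − (n − t + 1)·⌈δ(G)/(t−1)⌉) / (t(t−2)). -/
open Finset SimpleGraph Polynomial

variable {V : Type*}

/-- A clique partition of `G`: a set of cliques of `G` such that every edge of `G`
lies in exactly one of them. -/
def IsCliquePartition [DecidableEq V] (G : SimpleGraph V) (P : Finset (Finset V)) : Prop :=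
  (∀ s ∈ P, G.IsClique (s : Set V)) ∧
    ∀ u v : V, G.Adj u v → ∃! s, s ∈ P ∧ u ∈ s ∧ v ∈ s

/-- The spectral radius of a finite graph: the largest eigenvalue of its adjacency matrix. -/
noncomputable def specRad [Fintype V] [DecidableEq V] (G : SimpleGraph V)
    [DecidableRel G.Adj] : ℝ :=
  sSup {μ : ℝ | Module.End.HasEigenvalue (Matrix.toLin' (G.adjMatrix ℝ)) μ}

/-- `cpT G t` : the minimum number of cliques in a clique partition of `G` in which
every clique has at most `t` vertices. -/
noncomputable def cpT [DecidableEq V] (G : SimpleGraph V) (t : ℕ) : ℕ :=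
  sInf {m | ∃ P : Finset (Finset V),
    IsCliquePartition G P ∧ (∀ s ∈ P, s.card ≤ t) ∧ P.card = m}

/-- `cp G` : the clique partition number of `G`. -/
noncomputable def cp [DecidableEq V] (G : SimpleGraph V) : ℕ :=
  sInf {m | ∃ P : Finset (Finset V), IsCliquePartition G P ∧ P.card = m}

/-- `piT G t` : the minimum total size of a clique partition of `G` in which
every clique has at most `t` vertices. -/
noncomputable def piT [DecidableEq V] (G : SimpleGraph V) (t : ℕ) : ℕ :=
  sInf {m | ∃ P : Finset (Finset V),
    IsCliquePartition G P ∧ (∀ s ∈ P, s.card ≤ t) ∧ ∑ s ∈ P, s.card = m}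

/-- `piTotal G` : the minimum total size of a clique partition of `G`. -/
noncomputable def piTotal [DecidableEq V] (G : SimpleGraph V) : ℕ :=
  sInf {m | ∃ P : Finset (Finset V), IsCliquePartition G P ∧ ∑ s ∈ P, s.card = m}

/-- `kT G t` : the maximum number of pairwise edge-disjoint `t`-cliques in `G`
(`t`-cliques are edge-disjoint iff they share at most one vertex). -/
noncomputable def kT [DecidableEq V] (G : SimpleGraph V) (t : ℕ) : ℕ :=
  sSup {m | ∃ S : Finset (Finset V), (∀ s ∈ S, G.IsNClique t s) ∧
    (∀ s₁ ∈ S, ∀ s₂ ∈ S, s₁ ≠ s₂ → (s₁ ∩ s₂).card ≤ 1) ∧ S.card = m}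

section CliqueSpectralAux

open Matrix

variable [Fintype V] [DecidableEq V]


variable [Fintype V] [DecidableEq V]

private lemma sum_indicator_card' {ι : Type*} (P : Finset ι) (p : ι → Prop)
    [DecidablePred p] (c : ℝ) :
    ∑ s ∈ P, (if p s then c else 0) = ((P.filter p).card : ℝ) * c := by
  rw [← Finset.sum_filter, Finset.sum_const, nsmul_eq_mul]

private lemma erase_disjoint' (G : SimpleGraph V) (P : Finset (Finset V))
    (hclique : ∀ s ∈ P, G.IsClique (s : Set V))
    (hcover : ∀ v w : V, G.Adj v w → ∃! s, s ∈ P ∧ v ∈ s ∧ w ∈ s) (v : V) :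
    ∀ s₁ ∈ P.filter (fun s => v ∈ s), ∀ s₂ ∈ P.filter (fun s => v ∈ s),
      s₁ ≠ s₂ → Disjoint (s₁.erase v) (s₂.erase v) := by
  intro s₁ hs₁ s₂ hs₂ hne
  simp only [Finset.mem_filter] at hs₁ hs₂
  rw [Finset.disjoint_left]
  intro w hw₁ hw₂
  have hw1' := Finset.mem_of_mem_erase hw₁
  have hvw : w ≠ v := Finset.ne_of_mem_erase hw₁
  have hadj : G.Adj v w :=
    hclique s₁ hs₁.1 (Finset.mem_coe.mpr hs₁.2) (Finset.mem_coe.mpr hw1') (Ne.symm hvw)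
  obtain ⟨c, -, huniq⟩ := hcover v w hadj
  have h1 : s₁ = c := huniq s₁ ⟨hs₁.1, hs₁.2, hw1'⟩
  have h2 : s₂ = c := huniq s₂ ⟨hs₂.1, hs₂.2, Finset.mem_of_mem_erase hw₂⟩
  exact hne (h1.trans h2.symm)

private lemma nbhd_eq' (G : SimpleGraph V) [DecidableRel G.Adj] (P : Finset (Finset V))
    (hclique : ∀ s ∈ P, G.IsClique (s : Set V))
    (hcover : ∀ v w : V, G.Adj v w → ∃! s, s ∈ P ∧ v ∈ s ∧ w ∈ s) (v : V) :
    G.neighborFinset v = (P.filter (fun s => v ∈ s)).biUnion (fun s => s.erase v) := by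
  ext w
  simp only [mem_neighborFinset, Finset.mem_biUnion, Finset.mem_filter, Finset.mem_erase]
  constructor
  · intro hadj
    obtain ⟨s, ⟨hsP, hvs, hws⟩, -⟩ := hcover v w hadj
    exact ⟨s, ⟨hsP, hvs⟩, (G.ne_of_adj hadj).symm, hws⟩
  · rintro ⟨s, ⟨hsP, hvs⟩, hwv, hws⟩
    exact hclique s hsP (Finset.mem_coe.mpr hvs) (Finset.mem_coe.mpr hws) (Ne.symm hwv)

private lemma quad_id' (G : SimpleGraph V) [DecidableRel G.Adj] (P : Finset (Finset V))
    (hclique : ∀ s ∈ P, G.IsClique (s : Set V))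
    (hcover : ∀ v w : V, G.Adj v w → ∃! s, s ∈ P ∧ v ∈ s ∧ w ∈ s) (x : V → ℝ) :
    ∑ v : V, ∑ w : V, (if G.Adj v w then (1:ℝ) else 0) * (x v * x w)
      = ∑ s ∈ P, ((∑ v ∈ s, x v)^2 - ∑ v ∈ s, (x v)^2) := by
  classical
  have hsq : ∀ s : Finset V, (∑ v ∈ s, x v)^2 - ∑ v ∈ s, (x v)^2
      = ∑ v ∈ s, ∑ w ∈ s.erase v, x v * x w := by
    intro s
    rw [sq, Finset.sum_mul_sum, ← Finset.sum_sub_distrib]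
    refine Finset.sum_congr rfl fun v hv => ?_
    rw [← Finset.add_sum_erase s (fun w => x v * x w) hv]
    ring
  have hL : ∀ v : V, ∑ w : V, (if G.Adj v w then (1:ℝ) else 0) * (x v * x w)
      = ∑ w ∈ G.neighborFinset v, x v * x w := by
    intro v
    rw [neighborFinset_eq_filter, Finset.sum_filter]
    refine Finset.sum_congr rfl fun w _ => ?_
    by_cases h : G.Adj v w <;> simp [h]
  calc ∑ v : V, ∑ w : V, (if G.Adj v w then (1:ℝ) else 0) * (x v * x w)
      = ∑ v : V, ∑ s ∈ P.filter (fun s => v ∈ s), ∑ w ∈ s.erase v, x v * x w := by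
        refine Finset.sum_congr rfl fun v _ => ?_
        rw [hL v, nbhd_eq' G P hclique hcover v,
          Finset.sum_biUnion ?_]
        intro s₁ hs₁ s₂ hs₂ hne
        exact erase_disjoint' G P hclique hcover v s₁ (Finset.mem_coe.mp hs₁) s₂
          (Finset.mem_coe.mp hs₂) hne
    _ = ∑ v : V, ∑ s ∈ P, (if v ∈ s then ∑ w ∈ s.erase v, x v * x w else 0) := by
        refine Finset.sum_congr rfl fun v _ => ?_
        rw [Finset.sum_filter]
    _ = ∑ s ∈ P, ∑ v : V, (if v ∈ s then ∑ w ∈ s.erase v, x v * x w else 0) :=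
        Finset.sum_comm
    _ = ∑ s ∈ P, ∑ v ∈ s, ∑ w ∈ s.erase v, x v * x w := by
        refine Finset.sum_congr rfl fun s _ => ?_
        exact Fintype.sum_ite_mem s _
    _ = ∑ s ∈ P, ((∑ v ∈ s, x v)^2 - ∑ v ∈ s, (x v)^2) :=
        Finset.sum_congr rfl fun s _ => (hsq s).symm

private lemma eig_bound' (G : SimpleGraph V) [DecidableRel G.Adj] (P : Finset (Finset V))
    (t : ℕ)
    (hclique : ∀ s ∈ P, G.IsClique (s : Set V))
    (hcard : ∀ s ∈ P, s.card ≤ t)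
    (hcover : ∀ v w : V, G.Adj v w → ∃! s, s ∈ P ∧ v ∈ s ∧ w ∈ s)
    (Q : ℝ) (hQ0 : 0 ≤ Q)
    (hQp : ∀ v : V, Q ≤ (((P.filter fun s => v ∈ s).card : ℕ) : ℝ))
    (μ : ℝ) (hμ : Module.End.HasEigenvalue (Matrix.toLin' (G.adjMatrix ℝ)) μ) :
    μ ≤ (∑ v : V, (((P.filter fun s => v ∈ s).card : ℕ) : ℝ))
        - ((Fintype.card V : ℝ) - t + 1) * Q := by
  classical
  obtain ⟨x, hx⟩ := hμ.exists_hasEigenvector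
  have hxe : (G.adjMatrix ℝ) *ᵥ x = μ • x := by
    have h := hx.apply_eq_smul
    rwa [Matrix.toLin'_apply] at h
  have heig : ∀ v : V, ∑ w : V, (if G.Adj v w then (1:ℝ) else 0) * x w = μ * x v := by
    intro v
    have h := congrFun hxe v
    simpa [Matrix.mulVec, dotProduct, adjMatrix_apply] using h
  set pn : V → ℝ := fun v => (((P.filter fun s => v ∈ s).card : ℕ) : ℝ) with hpn
  set Sx : ℝ := ∑ v : V, (x v)^2 with hSxdef
  have hSx : 0 < Sx := by
    have hne : ∃ v, x v ≠ 0 := by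
      by_contra h; push_neg at h; exact hx.2 (funext fun v => h v)
    obtain ⟨v₀, hv₀⟩ := hne
    refine Finset.sum_pos' (fun v _ => sq_nonneg _) ⟨v₀, Finset.mem_univ _, ?_⟩
    positivity
  set σ : Finset V → ℝ := fun s => ∑ v ∈ s, x v with hσ
  set T : ℝ := ∑ s ∈ P, (σ s)^2 with hT
  set A : ℝ := ∑ v : V, (pn v - Q) with hA
  set C : ℝ := t * Q + A with hC
  have hA0 : 0 ≤ A := Finset.sum_nonneg fun v _ => by
    have := hQp v; simp only [hpn]; linarith
  have hC0 : 0 ≤ C := add_nonneg (mul_nonneg (Nat.cast_nonneg t) hQ0) hA0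
  -- D identity
  have hD : ∑ s ∈ P, ∑ v ∈ s, (x v)^2 = ∑ v : V, pn v * (x v)^2 := by
    calc ∑ s ∈ P, ∑ v ∈ s, (x v)^2
        = ∑ s ∈ P, ∑ v : V, (if v ∈ s then (x v)^2 else 0) := by
          exact Finset.sum_congr rfl fun s _ => (Fintype.sum_ite_mem s _).symm
      _ = ∑ v : V, ∑ s ∈ P, (if v ∈ s then (x v)^2 else 0) := Finset.sum_comm
      _ = ∑ v : V, pn v * (x v)^2 := by
          exact Finset.sum_congr rfl fun v _ => sum_indicator_card' P _ _
  -- key identity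
  have hkey : μ * Sx = T - ∑ v : V, pn v * (x v)^2 := by
    have h1 := quad_id' G P hclique hcover x
    have h2 : ∑ v : V, ∑ w : V, (if G.Adj v w then (1:ℝ) else 0) * (x v * x w) = μ * Sx := by
      have hv : ∀ v : V, ∑ w : V, (if G.Adj v w then (1:ℝ) else 0) * (x v * x w)
          = μ * (x v)^2 := by
        intro v
        have h3 : ∑ w : V, (if G.Adj v w then (1:ℝ) else 0) * (x v * x w)
            = x v * ∑ w : V, (if G.Adj v w then (1:ℝ) else 0) * x w := by
          rw [Finset.mul_sum]
          exact Finset.sum_congr rfl fun w _ => by ring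
        rw [h3, heig v]; ring
      rw [Finset.sum_congr rfl fun v _ => hv v, ← Finset.mul_sum]
    calc μ * Sx = ∑ s ∈ P, ((σ s)^2 - ∑ v ∈ s, (x v)^2) := by rw [← h2, h1]
      _ = T - ∑ s ∈ P, ∑ v ∈ s, (x v)^2 := by rw [Finset.sum_sub_distrib]
      _ = T - ∑ v : V, pn v * (x v)^2 := by rw [hD]
  -- Cauchy-Schwarz part
  set y : V → ℝ := fun v => ∑ s ∈ P, (if v ∈ s then σ s else 0) with hy
  have hT1 : T = ∑ v : V, x v * y v := by
    calc T = ∑ s ∈ P, ∑ v : V, (if v ∈ s then x v * σ s else 0) := by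
          refine Finset.sum_congr rfl fun s _ => ?_
          rw [sq, Fintype.sum_ite_mem s (fun v => x v * σ s), ← Finset.sum_mul]
      _ = ∑ v : V, ∑ s ∈ P, (if v ∈ s then x v * σ s else 0) := Finset.sum_comm
      _ = ∑ v : V, x v * y v := by
          refine Finset.sum_congr rfl fun v _ => ?_
          rw [hy, Finset.mul_sum]
          exact Finset.sum_congr rfl fun s _ => by by_cases h : v ∈ s <;> simp [h]
  have hCS : T^2 ≤ Sx * ∑ v : V, (y v)^2 := by
    rw [hT1]
    exact Finset.sum_mul_sq_le_sq_mul_sq Finset.univ x y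
  have hyexp : ∑ v : V, (y v)^2
      = ∑ s ∈ P, ∑ s' ∈ P, (((s ∩ s').card : ℕ) : ℝ) * (σ s * σ s') := by
    calc ∑ v : V, (y v)^2
        = ∑ v : V, ∑ s ∈ P, ∑ s' ∈ P, (if v ∈ s ∧ v ∈ s' then σ s * σ s' else 0) := by
          refine Finset.sum_congr rfl fun v _ => ?_
          rw [sq, hy, Finset.sum_mul_sum]
          refine Finset.sum_congr rfl fun s _ => Finset.sum_congr rfl fun s' _ => ?_
          by_cases h1 : v ∈ s <;> by_cases h2 : v ∈ s' <;> simp [h1, h2]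
      _ = ∑ s ∈ P, ∑ v : V, ∑ s' ∈ P, (if v ∈ s ∧ v ∈ s' then σ s * σ s' else 0) :=
          Finset.sum_comm
      _ = ∑ s ∈ P, ∑ s' ∈ P, ∑ v : V, (if v ∈ s ∧ v ∈ s' then σ s * σ s' else 0) := by
          exact Finset.sum_congr rfl fun s _ => Finset.sum_comm
      _ = ∑ s ∈ P, ∑ s' ∈ P, (((s ∩ s').card : ℕ) : ℝ) * (σ s * σ s') := by
          refine Finset.sum_congr rfl fun s _ => Finset.sum_congr rfl fun s' _ => ?_
          rw [sum_indicator_card' Finset.univ (fun v => v ∈ s ∧ v ∈ s') _]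
          have hfe : Finset.univ.filter (fun v => v ∈ s ∧ v ∈ s') = s ∩ s' := by
            ext v; simp [Finset.mem_inter]
          rw [hfe]
  have hrow : ∀ s ∈ P, ∑ s' ∈ P, (((s ∩ s').card : ℕ) : ℝ) ≤ C := by
    intro s hs
    have h1 : ∑ s' ∈ P, (((s ∩ s').card : ℕ) : ℝ) = ∑ v ∈ s, pn v := by
      calc ∑ s' ∈ P, (((s ∩ s').card : ℕ) : ℝ)
          = ∑ s' ∈ P, ∑ v ∈ s, (if v ∈ s' then (1:ℝ) else 0) := by
            refine Finset.sum_congr rfl fun s' _ => ?_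
            rw [Finset.sum_ite_mem]
            simp
        _ = ∑ v ∈ s, ∑ s' ∈ P, (if v ∈ s' then (1:ℝ) else 0) := Finset.sum_comm
        _ = ∑ v ∈ s, pn v := by
            refine Finset.sum_congr rfl fun v _ => ?_
            rw [sum_indicator_card' P _ _, mul_one]
    rw [h1]
    have h2 : ∑ v ∈ s, pn v = (s.card : ℝ) * Q + ∑ v ∈ s, (pn v - Q) := by
      rw [Finset.sum_sub_distrib, Finset.sum_const, nsmul_eq_mul]; ring
    have h3 : ∑ v ∈ s, (pn v - Q) ≤ A := by
      refine Finset.sum_le_sum_of_subset_of_nonneg (Finset.subset_univ s) fun v _ _ => ?_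
      have := hQp v; simp only [hpn]; linarith
    have h4 : (s.card : ℝ) * Q ≤ (t : ℝ) * Q := by
      have := hcard s hs
      exact mul_le_mul_of_nonneg_right (by exact_mod_cast this) hQ0
    rw [h2, hC]; linarith
  have hyC : ∑ v : V, (y v)^2 ≤ C * T := by
    rw [hyexp]
    calc ∑ s ∈ P, ∑ s' ∈ P, (((s ∩ s').card : ℕ) : ℝ) * (σ s * σ s')
        ≤ ∑ s ∈ P, ∑ s' ∈ P, (((s ∩ s').card : ℕ) : ℝ) * (((σ s)^2 + (σ s')^2)/2) := by
          refine Finset.sum_le_sum fun s _ => Finset.sum_le_sum fun s' _ => ?_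
          have hnn : (0:ℝ) ≤ (((s ∩ s').card : ℕ) : ℝ) := Nat.cast_nonneg _
          nlinarith [sq_nonneg (σ s - σ s')]
      _ = ∑ s ∈ P, (∑ s' ∈ P, (((s ∩ s').card : ℕ) : ℝ)) * (σ s)^2 := by
          have hhalf : ∑ s ∈ P, ∑ s' ∈ P, (((s ∩ s').card : ℕ) : ℝ) * (σ s')^2 / 2
              = ∑ s ∈ P, ∑ s' ∈ P, (((s ∩ s').card : ℕ) : ℝ) * (σ s)^2 / 2 := by
            rw [Finset.sum_comm]
            exact Finset.sum_congr rfl fun s _ => Finset.sum_congr rfl fun s' _ => by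
              rw [Finset.inter_comm]
          calc ∑ s ∈ P, ∑ s' ∈ P, (((s ∩ s').card : ℕ) : ℝ) * (((σ s)^2 + (σ s')^2)/2)
              = ∑ s ∈ P, ∑ s' ∈ P, ((((s ∩ s').card : ℕ) : ℝ) * (σ s)^2 / 2
                + (((s ∩ s').card : ℕ) : ℝ) * (σ s')^2 / 2) :=
                Finset.sum_congr rfl fun s _ => Finset.sum_congr rfl fun s' _ => by ring
            _ = ∑ s ∈ P, ∑ s' ∈ P, (((s ∩ s').card : ℕ) : ℝ) * (σ s)^2 / 2
                + ∑ s ∈ P, ∑ s' ∈ P, (((s ∩ s').card : ℕ) : ℝ) * (σ s')^2 / 2 := by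
                simp only [Finset.sum_add_distrib]
            _ = ∑ s ∈ P, ∑ s' ∈ P, (((s ∩ s').card : ℕ) : ℝ) * (σ s)^2 := by
                rw [hhalf, ← Finset.sum_add_distrib]
                refine Finset.sum_congr rfl fun s _ => ?_
                rw [← Finset.sum_add_distrib]
                exact Finset.sum_congr rfl fun s' _ => by ring
            _ = ∑ s ∈ P, (∑ s' ∈ P, (((s ∩ s').card : ℕ) : ℝ)) * (σ s)^2 :=
                Finset.sum_congr rfl fun s _ => (Finset.sum_mul _ _ _).symm
      _ ≤ ∑ s ∈ P, C * (σ s)^2 :=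
          Finset.sum_le_sum fun s hs => mul_le_mul_of_nonneg_right (hrow s hs) (sq_nonneg _)
      _ = C * T := by rw [hT, Finset.mul_sum]
  have hTC : T ≤ C * Sx := by
    rcases le_or_gt T 0 with h | h
    · exact h.trans (mul_nonneg hC0 hSx.le)
    · have h2 : T * T ≤ (C * Sx) * T := by
        calc T * T = T^2 := (sq T).symm
          _ ≤ Sx * ∑ v : V, (y v)^2 := hCS
          _ ≤ Sx * (C * T) := by
              exact mul_le_mul_of_nonneg_left hyC hSx.le
          _ = (C * Sx) * T := by ring
      exact le_of_mul_le_mul_right h2 h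
  have hDQ : Q * Sx ≤ ∑ v : V, pn v * (x v)^2 := by
    rw [hSxdef, Finset.mul_sum]
    exact Finset.sum_le_sum fun v _ => mul_le_mul_of_nonneg_right (by have := hQp v; simp only [hpn]; linarith) (sq_nonneg _)
  have hμC : μ ≤ C - Q := by
    have hfin : μ * Sx ≤ (C - Q) * Sx := by
      have hexp : (C - Q) * Sx = C * Sx - Q * Sx := by ring
      rw [hexp, hkey]; linarith
    exact le_of_mul_le_mul_right hfin hSx
  have hAeq : A = (∑ v : V, pn v) - (Fintype.card V : ℝ) * Q := by
    rw [hA, Finset.sum_sub_distrib, Finset.sum_const, Finset.card_univ, nsmul_eq_mul]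
  calc μ ≤ C - Q := hμC
    _ = (∑ v : V, pn v) - ((Fintype.card V : ℝ) - t + 1) * Q := by rw [hC, hAeq]; ring

end CliqueSpectralAux

/-- Spectral upper bound for the maximum number `k_t(G)` of pairwise
edge-disjoint `t`-cliques:
`k_t(G) ≤ (2m − ρ(G) − (n − t + 1)·⌈δ(G)/(t−1)⌉) / (t(t−2))`. -/
theorem kT_le_specRad [Fintype V] [DecidableEq V] (G : SimpleGraph V) [DecidableRel G.Adj]
    (t : ℕ) (ht : 2 < t) (hconn : G.Connected) (hm : 1 ≤ G.edgeFinset.card) :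
    (kT G t : ℝ) ≤ (2 * (G.edgeFinset.card : ℝ) - specRad G -
        ((Fintype.card V : ℝ) - t + 1) * (⌈(G.minDegree : ℝ) / ((t : ℝ) - 1)⌉ : ℤ)) /
      ((t : ℝ) * ((t : ℝ) - 2)) := by
  classical
  have htR : (2:ℝ) < (t:ℝ) := by exact_mod_cast ht
  -- extremal family S
  obtain ⟨S, hS1, hS2, hS3⟩ : ∃ S : Finset (Finset V),
      (∀ s ∈ S, G.IsNClique t s) ∧
      (∀ s₁ ∈ S, ∀ s₂ ∈ S, s₁ ≠ s₂ → (s₁ ∩ s₂).card ≤ 1) ∧ S.card = kT G t := by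
    have hmem := Nat.sSup_mem (s := {m | ∃ S : Finset (Finset V),
        (∀ s ∈ S, G.IsNClique t s) ∧
        (∀ s₁ ∈ S, ∀ s₂ ∈ S, s₁ ≠ s₂ → (s₁ ∩ s₂).card ≤ 1) ∧ S.card = m})
      ⟨0, ∅, by simp, by simp, by simp⟩
      ⟨Fintype.card (Finset V), by rintro m ⟨S, -, -, rfl⟩; exact S.card_le_univ⟩
    obtain ⟨S, h1, h2, h3⟩ := hmem
    exact ⟨S, h1, h2, h3⟩
  -- pairs of uncovered edges
  set pairs : Finset (Finset V) :=
    Finset.univ.filter (fun s : Finset V =>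
      ∃ u w : V, G.Adj u w ∧ s = {u, w} ∧ ∀ c ∈ S, ¬ (u ∈ c ∧ w ∈ c)) with hpairsdef
  set P : Finset (Finset V) := S ∪ pairs with hPdef
  have hpairs_mem : ∀ s ∈ pairs,
      ∃ u w : V, G.Adj u w ∧ s = {u, w} ∧ ∀ c ∈ S, ¬ (u ∈ c ∧ w ∈ c) := by
    intro s hs
    exact (Finset.mem_filter.mp hs).2
  have hpairs_card : ∀ s ∈ pairs, s.card = 2 := by
    intro s hs
    obtain ⟨u, w, hadj, rfl, -⟩ := hpairs_mem s hs
    exact Finset.card_pair hadj.ne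
  have hScard : ∀ s ∈ S, s.card = t := fun s hs => (hS1 s hs).2
  have hdisjSP : Disjoint S pairs := by
    rw [Finset.disjoint_left]
    intro s hsS hsp
    have h2 := hpairs_card s hsp
    have h3 := hScard s hsS
    omega
  have hclique : ∀ s ∈ P, G.IsClique (s : Set V) := by
    intro s hs
    rcases Finset.mem_union.mp hs with h | h
    · exact (hS1 s h).1
    · obtain ⟨u, w, hadj, rfl, -⟩ := hpairs_mem s h
      rw [Finset.coe_insert, Finset.coe_singleton]
      exact SimpleGraph.isClique_pair.mpr (fun _ => hadj)
  have hcard : ∀ s ∈ P, s.card ≤ t := by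
    intro s hs
    rcases Finset.mem_union.mp hs with h | h
    · exact le_of_eq (hScard s h)
    · rw [hpairs_card s h]; omega
  -- the pair of any two distinct covered vertices determines the part
  have hpair_eq : ∀ (s : Finset V), s ∈ pairs → ∀ v w : V, v ≠ w → v ∈ s → w ∈ s →
      s = {v, w} := by
    intro s hs v w hvw hvs hws
    have hc2 := hpairs_card s hs
    have hsub : ({v, w} : Finset V) ⊆ s := by
      intro a ha
      rcases Finset.mem_insert.mp ha with rfl | ha
      · exact hvs
      · rw [Finset.mem_singleton] at ha; subst ha; exact hws
    have : ({v, w} : Finset V).card = 2 := Finset.card_pair hvw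
    exact (Finset.eq_of_subset_of_card_le hsub (by omega)).symm
  have hcover : ∀ v w : V, G.Adj v w → ∃! s, s ∈ P ∧ v ∈ s ∧ w ∈ s := by
    intro v w hadj
    by_cases hc : ∃ c ∈ S, v ∈ c ∧ w ∈ c
    · obtain ⟨c, hcS, hvc, hwc⟩ := hc
      refine ⟨c, ⟨Finset.mem_union_left _ hcS, hvc, hwc⟩, ?_⟩
      rintro s ⟨hsP, hvs, hws⟩
      rcases Finset.mem_union.mp hsP with hsS | hsp
      · by_contra hne
        have hsub : ({v, w} : Finset V) ⊆ s ∩ c := by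
          intro a ha
          rcases Finset.mem_insert.mp ha with rfl | ha
          · exact Finset.mem_inter.mpr ⟨hvs, hvc⟩
          · rw [Finset.mem_singleton] at ha; subst ha
            exact Finset.mem_inter.mpr ⟨hws, hwc⟩
        have h2 : 2 ≤ (s ∩ c).card := by
          have := Finset.card_le_card hsub
          rw [Finset.card_pair hadj.ne] at this
          exact this
        have := hS2 s hsS c hcS hne
        omega
      · exfalso
        obtain ⟨u₁, w₁, hadj₁, hs_eq, hnone⟩ := hpairs_mem s hsp
        have hseq : s = {v, w} := hpair_eq s hsp v w hadj.ne hvs hws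
        apply hnone c hcS
        constructor
        · have : u₁ ∈ s := by rw [hs_eq]; exact Finset.mem_insert_self _ _
          rw [hseq] at this
          rcases Finset.mem_insert.mp this with rfl | h
          · exact hvc
          · rw [Finset.mem_singleton] at h; subst h; exact hwc
        · have : w₁ ∈ s := by rw [hs_eq]; exact Finset.mem_insert_of_mem (Finset.mem_singleton_self _)
          rw [hseq] at this
          rcases Finset.mem_insert.mp this with rfl | h
          · exact hvc
          · rw [Finset.mem_singleton] at h; subst h; exact hwc
    · push_neg at hc
      have hmem : ({v, w} : Finset V) ∈ pairs := by
        rw [hpairsdef]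
        refine Finset.mem_filter.mpr ⟨Finset.mem_univ _, v, w, hadj, rfl, ?_⟩
        rintro c hcS ⟨h1', h2'⟩
        exact hc c hcS h1' h2'
      refine ⟨{v, w}, ⟨Finset.mem_union_right _ hmem, Finset.mem_insert_self _ _,
        Finset.mem_insert_of_mem (Finset.mem_singleton_self _)⟩, ?_⟩
      rintro s ⟨hsP, hvs, hws⟩
      rcases Finset.mem_union.mp hsP with hsS | hsp
      · exact (hc s hsS hvs hws).elim
      · exact hpair_eq s hsp v w hadj.ne hvs hws
  -- Q
  set Qz : ℤ := ⌈(G.minDegree : ℝ) / ((t : ℝ) - 1)⌉ with hQzdef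
  have htpos : (0:ℝ) < (t:ℝ) - 1 := by linarith
  have hQ0 : (0:ℝ) ≤ (Qz:ℝ) := by
    have h : (0:ℤ) ≤ Qz := Int.ceil_nonneg (div_nonneg (Nat.cast_nonneg _) htpos.le)
    exact_mod_cast h
  -- degree bound
  have hdeg : ∀ v : V, G.degree v ≤ (P.filter fun s => v ∈ s).card * (t - 1) := by
    intro v
    have h1 := nbhd_eq' G P hclique hcover v
    calc G.degree v = (G.neighborFinset v).card := rfl
      _ = ((P.filter fun s => v ∈ s).biUnion (fun s => s.erase v)).card := by rw [h1]
      _ ≤ ∑ s ∈ P.filter fun s => v ∈ s, (s.erase v).card := Finset.card_biUnion_le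
      _ ≤ ∑ _s ∈ P.filter fun s => v ∈ s, (t-1) := by
          refine Finset.sum_le_sum fun s hs => ?_
          have hmem := Finset.mem_filter.mp hs
          have h2 := hcard s hmem.1
          have h3 : (s.erase v).card = s.card - 1 := Finset.card_erase_of_mem hmem.2
          omega
      _ = (P.filter fun s => v ∈ s).card * (t-1) := by
          rw [Finset.sum_const, smul_eq_mul]
  have hQp : ∀ v : V, (Qz:ℝ) ≤ (((P.filter fun s => v ∈ s).card : ℕ) : ℝ) := by
    intro v
    have h2 : G.minDegree ≤ (P.filter fun s => v ∈ s).card * (t-1) :=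
      (G.minDegree_le_degree v).trans (hdeg v)
    have h1 : (G.minDegree : ℝ) ≤ (((P.filter fun s => v ∈ s).card : ℕ) : ℝ) * ((t:ℝ) - 1) := by
      calc (G.minDegree:ℝ) ≤ (((P.filter fun s => v ∈ s).card * (t-1) : ℕ) : ℝ) := by
            exact_mod_cast h2
        _ = (((P.filter fun s => v ∈ s).card : ℕ) : ℝ) * ((t:ℝ) - 1) := by
            push_cast [Nat.cast_sub (show 1 ≤ t by omega)]
            ring
    have h3 : Qz ≤ (((P.filter fun s => v ∈ s).card : ℕ) : ℤ) := by
      rw [hQzdef]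
      refine Int.ceil_le.mpr ?_
      rw [div_le_iff₀ htpos]
      push_cast
      exact_mod_cast h1
    exact_mod_cast h3
  -- counting with x ≡ 1
  have hcount := quad_id' G P hclique hcover (fun _ => (1:ℝ))
  have hdeg2 : ∑ v : V, ∑ w : V, (if G.Adj v w then (1:ℝ) else 0) * ((1:ℝ) * 1)
      = 2 * (G.edgeFinset.card : ℝ) := by
    have hv : ∀ v : V, ∑ w : V, (if G.Adj v w then (1:ℝ) else 0) * ((1:ℝ) * 1)
        = (G.degree v : ℝ) := by
      intro v
      simp only [mul_one]
      rw [Finset.sum_boole]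
      congr 1
      rw [← SimpleGraph.neighborFinset_eq_filter]
      rfl
    rw [Finset.sum_congr rfl fun v _ => hv v]
    rw [← Nat.cast_sum]
    rw [SimpleGraph.sum_degrees_eq_twice_card_edges]
    push_cast
    ring
  have hRHS1 : ∑ s ∈ P, ((∑ _v ∈ s, (1:ℝ))^2 - ∑ _v ∈ s, ((1:ℝ))^2)
      = ∑ s ∈ P, (((s.card : ℕ) : ℝ)^2 - ((s.card : ℕ) : ℝ)) := by
    refine Finset.sum_congr rfl fun s _ => ?_
    simp [Finset.sum_const]
  -- split sums over the union
  have hsplit1 : ∑ s ∈ P, (((s.card : ℕ) : ℝ)^2 - ((s.card : ℕ) : ℝ))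
      = (kT G t : ℝ) * ((t:ℝ)^2 - t) + 2 * (pairs.card : ℝ) := by
    rw [hPdef, Finset.sum_union hdisjSP]
    have e1 : ∑ s ∈ S, (((s.card : ℕ) : ℝ)^2 - ((s.card : ℕ) : ℝ))
        = (S.card : ℝ) * ((t:ℝ)^2 - t) := by
      rw [Finset.sum_congr rfl (fun s hs => by rw [hScard s hs]), Finset.sum_const,
        nsmul_eq_mul]
    have e2 : ∑ s ∈ pairs, (((s.card : ℕ) : ℝ)^2 - ((s.card : ℕ) : ℝ))
        = (pairs.card : ℝ) * 2 := by
      rw [Finset.sum_congr rfl (fun s hs => by rw [hpairs_card s hs]), Finset.sum_const,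
        nsmul_eq_mul]
      norm_num
    rw [e1, e2, hS3]
    ring
  have hsplit2 : ∑ s ∈ P, ((s.card : ℕ) : ℝ)
      = (kT G t : ℝ) * (t:ℝ) + 2 * (pairs.card : ℝ) := by
    rw [hPdef, Finset.sum_union hdisjSP]
    have e1 : ∑ s ∈ S, ((s.card : ℕ) : ℝ) = (S.card : ℝ) * (t:ℝ) := by
      rw [Finset.sum_congr rfl (fun s hs => by rw [hScard s hs]), Finset.sum_const,
        nsmul_eq_mul]
    have e2 : ∑ s ∈ pairs, ((s.card : ℕ) : ℝ) = (pairs.card : ℝ) * 2 := by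
      rw [Finset.sum_congr rfl (fun s hs => by rw [hpairs_card s hs]), Finset.sum_const,
        nsmul_eq_mul]
      norm_num
    rw [e1, e2, hS3]
    ring
  have hSpn : ∑ v : V, (((P.filter fun s => v ∈ s).card : ℕ) : ℝ) = ∑ s ∈ P, ((s.card : ℕ) : ℝ) := by
    calc ∑ v : V, (((P.filter fun s => v ∈ s).card : ℕ) : ℝ)
        = ∑ v : V, ∑ s ∈ P, (if v ∈ s then (1:ℝ) else 0) := by
          refine Finset.sum_congr rfl fun v _ => ?_
          rw [← Finset.sum_filter, Finset.sum_const, nsmul_eq_mul, mul_one]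
      _ = ∑ s ∈ P, ∑ v : V, (if v ∈ s then (1:ℝ) else 0) := Finset.sum_comm
      _ = ∑ s ∈ P, ((s.card : ℕ) : ℝ) := by
          refine Finset.sum_congr rfl fun s _ => ?_
          rw [Finset.sum_boole]
          congr 1
          simp
  -- the two counting identities
  have hcnt1 : 2 * (G.edgeFinset.card : ℝ)
      = (kT G t : ℝ) * ((t:ℝ)^2 - t) + 2 * (pairs.card : ℝ) := by
    rw [← hdeg2, hcount, hRHS1, hsplit1]
  have hSval : ∑ v : V, (((P.filter fun s => v ∈ s).card : ℕ) : ℝ)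
      = 2 * (G.edgeFinset.card : ℝ) - (kT G t : ℝ) * ((t:ℝ) * ((t:ℝ) - 2)) := by
    rw [hSpn, hsplit2]
    nlinarith [hcnt1]
  -- spectral bound
  have hspec : specRad G ≤ (∑ v : V, (((P.filter fun s => v ∈ s).card : ℕ) : ℝ))
      - ((Fintype.card V : ℝ) - t + 1) * (Qz : ℝ) := by
    apply Real.sSup_le
    · intro μ hμ
      exact eig_bound' G P t hclique hcard hcover (Qz:ℝ) hQ0 hQp μ hμ
    · have h1 : (Fintype.card V : ℝ) * (Qz:ℝ) ≤ ∑ v : V, (((P.filter fun s => v ∈ s).card : ℕ) : ℝ) := by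
        calc (Fintype.card V : ℝ) * (Qz:ℝ) = ∑ _v : V, (Qz:ℝ) := by
              rw [Finset.sum_const, Finset.card_univ, nsmul_eq_mul]
          _ ≤ _ := Finset.sum_le_sum fun v _ => hQp v
      have h2 : 0 ≤ ((t:ℝ) - 1) * (Qz:ℝ) := mul_nonneg (by linarith) hQ0
      have h3 : ((Fintype.card V : ℝ) - t + 1) * (Qz:ℝ)
          = (Fintype.card V : ℝ) * (Qz:ℝ) - ((t:ℝ) - 1) * (Qz:ℝ) := by ring
      linarith
  -- conclude
  have htt : (0:ℝ) < (t:ℝ) * ((t:ℝ) - 2) := by nlinarith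
  rw [le_div_iff₀ htt]
  rw [hSval] at hspec
  linarith
end

section
/- Let t > 2 be an integer and let G be a finite connected simple graph with n vertices, m edges (m ≥ 1), minimum degree δ(G) and spectral radius ρ(G). Then k_t(G) = (2m − ρ(G) − (n − t + 1)·⌈δ(G)/(t−1)⌉) / (t(t−2)) if and only if G is regular and admits a K_t-decomposition. -/
/-!
Extend a maximum family of edge-disjoint `t`-cliques by the uncovered edges to a clique
partition `P`, and let `c v` be the number of parts through `v`. Counting incidences gives
`2m = ∑ c v + t (t - 2) k_t(G)`, and `deg v ≤ (t - 1) c v`, so `a = ⌈δ / (t - 1)⌉ ≤ c v`.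
For the adjacency matrix `A`, the positive vector `x = 1 + (c - a)` satisfies
`A x ≤ ((t - 1) a + ∑ (c v - a)) x`, so by the Collatz–Wielandt bound
`ρ ≤ ∑ c v - (n - t + 1) a`, which is the inequality `t (t - 2) k_t(G) ≤ 2m - ρ - (n - t + 1) a`.
At equality the bound is an eigenvalue, and on a connected graph a positive vector attaining
it is an eigenvector; this forces `c ≡ a` and `deg ≡ (t - 1) a`, so `G` is regular and every
part of `P` is a `t`-clique. Conversely, for a regular graph with a `K_t`-decomposition all
these estimates are equalities.
-/

open Finset SimpleGraph Polynomial

variable {V : Type*}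

open Module.End Matrix

namespace SimpleGraph

variable [Fintype V] {G : SimpleGraph V} [DecidableRel G.Adj]

lemma Connected.eq_zero_of_sum_neighborFinset_le (hconn : G.Connected) {z : V → ℝ} {μ : ℝ}
    (hz : ∀ v, 0 ≤ z v) (hrow : ∀ v, ∑ w ∈ G.neighborFinset v, z w ≤ μ * z v) {u : V}
    (hu : z u = 0) (v : V) : z v = 0 := by
  obtain ⟨p⟩ := hconn.preconnected u v
  induction p with
  | nil => exact hu
  | @cons a _ _ hadj _ ih =>
    refine ih ?_
    have hsum := hrow a
    rw [hu, mul_zero] at hsum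
    exact (sum_eq_zero_iff_of_nonneg fun w _ => hz w).1
      (hsum.antisymm (sum_nonneg fun w _ => hz w)) _ ((mem_neighborFinset _ _ _).2 hadj)

lemma Connected.minDegree_pos (hconn : G.Connected) (hm : 1 ≤ #G.edgeFinset) :
    0 < G.minDegree := by
  obtain ⟨e, he⟩ := card_pos.1 hm
  obtain ⟨⟨u, v⟩, rfl⟩ := Sym2.mk_surjective e
  have : Nontrivial V := ⟨u, v, (mem_edgeFinset.1 he).ne⟩
  exact hconn.preconnected.minDegree_pos_of_nontrivial

variable [DecidableEq V]

/-- The extra `c v - a` on the left is the slack that forces `c = a` in the equality case. -/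
lemma sum_neighborFinset_one_add_sub_add_le {r a : ℝ} (hr : 0 ≤ r) (ha : 1 ≤ a) {c : V → ℝ}
    (hac : ∀ v, a ≤ c v) (hdeg : ∀ v, (G.degree v : ℝ) ≤ r * c v) (v : V) :
    ∑ w ∈ G.neighborFinset v, (1 + (c w - a)) + (c v - a) ≤
      (r * a + ∑ w, (c w - a)) * (1 + (c v - a)) := by
  have he : ∀ w, 0 ≤ c w - a := fun w => sub_nonneg.2 (hac w)
  have hsum : ∑ w ∈ G.neighborFinset v, (1 + (c w - a)) =
      G.degree v + ∑ w ∈ G.neighborFinset v, (c w - a) := by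
    simp [sum_add_distrib]
  have hsub : ∑ w ∈ G.neighborFinset v, (c w - a) + (c v - a) ≤ ∑ w, (c w - a) := by
    rw [add_comm, ← sum_insert (f := fun w => c w - a) (G.notMem_neighborFinset_self v)]
    exact sum_le_univ_sum_of_nonneg he
  have hS : 0 ≤ ∑ w, (c w - a) := sum_nonneg fun w _ => he w
  rw [hsum]
  nlinarith [hdeg v, mul_nonneg (mul_nonneg hr (sub_nonneg.2 ha)) (he v), mul_nonneg hS (he v)]

lemma sum_neighborFinset_eq_of_hasEigenvector {μ : ℝ} {y : V → ℝ}
    (hy : HasEigenvector (toLin' (G.adjMatrix ℝ)) μ y) (v : V) :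
    ∑ w ∈ G.neighborFinset v, y w = μ * y v := by
  simpa using congrFun hy.apply_eq_smul v

lemma exists_eigenvector_le_smul {x : V → ℝ} (hx : ∀ v, 0 < x v) {μ : ℝ}
    (hμ : HasEigenvalue (toLin' (G.adjMatrix ℝ)) μ) :
    ∃ (y : V → ℝ) (c : ℝ) (u : V), 0 < c ∧ (∀ v, ∑ w ∈ G.neighborFinset v, y w = μ * y v) ∧
      (∀ v, y v ≤ c * x v) ∧ y u = c * x u := by
  obtain ⟨y, hy⟩ := hμ.exists_hasEigenvector
  obtain ⟨v₀, hv₀⟩ := Function.ne_iff.1 hy.2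
  have hrow := sum_neighborFinset_eq_of_hasEigenvector hy
  clear hy
  wlog hpos : 0 < y v₀ generalizing y
  · refine this (-y) (by simpa using hv₀) (fun v => by simp [hrow v]) ?_
    simpa using (not_lt.1 hpos).lt_of_ne hv₀
  obtain ⟨u, -, hu⟩ := exists_max_image univ (fun v => y v / x v) ⟨v₀, mem_univ _⟩
  refine ⟨y, y u / x u, u, (div_pos hpos (hx v₀)).trans_le (hu v₀ (mem_univ _)), hrow,
    fun v => (div_le_iff₀ (hx v)).1 (hu v (mem_univ _)), (div_mul_cancel₀ _ (hx u).ne').symm⟩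

lemma le_of_hasEigenvalue_of_sum_neighborFinset_le {x : V → ℝ} (hx : ∀ v, 0 < x v) {μ₀ : ℝ}
    (hrow : ∀ v, ∑ w ∈ G.neighborFinset v, x w ≤ μ₀ * x v) {μ : ℝ}
    (hμ : HasEigenvalue (toLin' (G.adjMatrix ℝ)) μ) : μ ≤ μ₀ := by
  obtain ⟨y, c, u, hc, hy, hyx, hyu⟩ := exists_eigenvector_le_smul hx hμ
  refine le_of_mul_le_mul_right ?_ (mul_pos hc (hx u))
  calc μ * (c * x u) = ∑ w ∈ G.neighborFinset u, y w := by rw [hy, hyu]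
    _ ≤ ∑ w ∈ G.neighborFinset u, c * x w := sum_le_sum fun w _ => hyx w
    _ = c * ∑ w ∈ G.neighborFinset u, x w := (mul_sum ..).symm
    _ ≤ c * (μ₀ * x u) := mul_le_mul_of_nonneg_left (hrow u) hc.le
    _ = μ₀ * (c * x u) := by ring

lemma Connected.sum_neighborFinset_eq_of_hasEigenvalue (hconn : G.Connected) {x : V → ℝ}
    (hx : ∀ v, 0 < x v) {μ₀ : ℝ} (hrow : ∀ v, ∑ w ∈ G.neighborFinset v, x w ≤ μ₀ * x v)
    (hμ₀ : HasEigenvalue (toLin' (G.adjMatrix ℝ)) μ₀) (v : V) :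
    ∑ w ∈ G.neighborFinset v, x w = μ₀ * x v := by
  obtain ⟨y, c, u, hc, hy, hyx, hyu⟩ := exists_eigenvector_le_smul hx hμ₀
  -- `c • x - y` is nonnegative, vanishes at `u` and is subharmonic, hence vanishes everywhere
  have hyx_eq : ∀ w, y w = c * x w := fun w => by
    refine (sub_eq_zero.1 (hconn.eq_zero_of_sum_neighborFinset_le (μ := μ₀)
      (fun v => sub_nonneg.2 (hyx v)) (fun v => ?_) (sub_eq_zero.2 hyu.symm) w)).symm
    rw [sum_sub_distrib, ← mul_sum, hy]
    linarith [mul_le_mul_of_nonneg_left (hrow v) hc.le]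
  refine mul_left_cancel₀ hc.ne' ?_
  rw [mul_sum, ← mul_assoc, mul_comm c, mul_assoc, ← hyx_eq, ← hy]
  exact sum_congr rfl fun w _ => (hyx_eq w).symm

end SimpleGraph

section SpectralRadius

variable [Fintype V] [DecidableEq V] {G : SimpleGraph V} [DecidableRel G.Adj]

lemma le_specRad {μ : ℝ} (hμ : HasEigenvalue (toLin' (G.adjMatrix ℝ)) μ) : μ ≤ specRad G :=
  le_csSup (finite_hasEigenvalue _).bddAbove hμ

lemma hasEigenvalue_specRad [Nonempty V] :
    HasEigenvalue (toLin' (G.adjMatrix ℝ)) (specRad G) := by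
  have hA := G.isHermitian_adjMatrix ℝ
  have hne : {μ | HasEigenvalue (toLin' (G.adjMatrix ℝ)) μ}.Nonempty :=
    ⟨hA.eigenvalues (Classical.arbitrary V), hasEigenvalue_iff_mem_spectrum.2 <| by
      rw [spectrum_toLin']; exact hA.eigenvalues_mem_spectrum_real _⟩
  exact hne.csSup_mem (finite_hasEigenvalue _)

lemma specRad_le_of_sum_neighborFinset_le {x : V → ℝ} (hx : ∀ v, 0 < x v) {μ₀ : ℝ}
    (hμ₀ : 0 ≤ μ₀) (hrow : ∀ v, ∑ w ∈ G.neighborFinset v, x w ≤ μ₀ * x v) : specRad G ≤ μ₀ :=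
  Real.sSup_le (fun _ hμ => le_of_hasEigenvalue_of_sum_neighborFinset_le hx hrow hμ) hμ₀

lemma specRad_eq_of_isRegularOfDegree [Nonempty V] {d : ℕ} (hd : G.IsRegularOfDegree d) :
    specRad G = d := by
  refine le_antisymm (specRad_le_of_sum_neighborFinset_le (x := fun _ => 1) (fun _ => one_pos)
    d.cast_nonneg fun v => by simp [hd v]) (le_specRad ?_)
  refine hasEigenvalue_of_hasEigenvector (x := fun _ => 1) ⟨mem_eigenspace_iff.2 ?_, ?_⟩
  · ext v; simp [hd v]
  · exact Function.ne_iff.2 ⟨Classical.arbitrary V, one_ne_zero⟩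

lemma specRad_le_of_degree_le {r a : ℝ} (hr : 0 ≤ r) (ha : 1 ≤ a) {c : V → ℝ}
    (hac : ∀ v, a ≤ c v) (hdeg : ∀ v, (G.degree v : ℝ) ≤ r * c v) :
    specRad G ≤ r * a + ∑ v, (c v - a) := by
  have he : ∀ v, 0 ≤ c v - a := fun v => sub_nonneg.2 (hac v)
  refine specRad_le_of_sum_neighborFinset_le (x := fun v => 1 + (c v - a))
    (fun v => by linarith [he v])
    (add_nonneg (mul_nonneg hr (by linarith)) (sum_nonneg fun w _ => he w)) fun v => ?_
  linarith [sum_neighborFinset_one_add_sub_add_le hr ha hac hdeg v, he v]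

lemma SimpleGraph.Connected.eq_and_degree_eq_of_specRad_eq (hconn : G.Connected) {r a : ℝ}
    (hr : 0 ≤ r) (ha : 1 ≤ a) {c : V → ℝ} (hac : ∀ v, a ≤ c v)
    (hdeg : ∀ v, (G.degree v : ℝ) ≤ r * c v) (heq : specRad G = r * a + ∑ v, (c v - a)) (v : V) :
    c v = a ∧ (G.degree v : ℝ) = r * a := by
  have := hconn.nonempty
  have hslack := sum_neighborFinset_one_add_sub_add_le hr ha hac hdeg
  have htight := hconn.sum_neighborFinset_eq_of_hasEigenvalue (x := fun v => 1 + (c v - a))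
    (fun v => by linarith [hac v]) (fun v => by linarith [hslack v, hac v])
    (heq ▸ hasEigenvalue_specRad)
  have hca : ∀ v, c v = a := fun v => le_antisymm (by linarith [hslack v, htight v]) (hac v)
  refine ⟨hca v, ?_⟩
  simpa [hca] using htight v

end SpectralRadius

section CliquePartition

variable [DecidableEq V] {G : SimpleGraph V} {P : Finset (Finset V)}

lemma IsCliquePartition.card_inter_le_one (hP : IsCliquePartition G P) {s₁ s₂ : Finset V}
    (h₁ : s₁ ∈ P) (h₂ : s₂ ∈ P) (hne : s₁ ≠ s₂) : #(s₁ ∩ s₂) ≤ 1 := by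
  by_contra! h
  obtain ⟨a, ha, b, hb, hab⟩ := one_lt_card.1 h
  rw [mem_inter] at ha hb
  obtain ⟨s, -, hs⟩ := hP.2 a b (hP.1 s₁ h₁ ha.1 hb.1 hab)
  exact hne ((hs s₁ ⟨h₁, ha.1, hb.1⟩).trans (hs s₂ ⟨h₂, ha.2, hb.2⟩).symm)

variable [Fintype V]

lemma sum_sum_filter_mem (P : Finset (Finset V)) (f : Finset V → ℕ) :
    ∑ v, ∑ s ∈ P with v ∈ s, f s = ∑ s ∈ P, #s * f s := by
  simp_rw [sum_filter]
  rw [sum_comm]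
  exact sum_congr rfl fun s _ => by rw [sum_ite_mem, univ_inter, sum_const, smul_eq_mul]

lemma sum_card_filter_mem (P : Finset (Finset V)) : ∑ v, #{s ∈ P | v ∈ s} = ∑ s ∈ P, #s := by
  simp only [card_eq_sum_ones, sum_sum_filter_mem, mul_one]

variable [DecidableRel G.Adj]

lemma IsCliquePartition.degree_eq_sum (hP : IsCliquePartition G P) (v : V) :
    G.degree v = ∑ s ∈ P with v ∈ s, (#s - 1) := by
  have hnbr : G.neighborFinset v = {s ∈ P | v ∈ s}.biUnion (·.erase v) := by
    ext w
    simp only [mem_neighborFinset, mem_biUnion, mem_filter, mem_erase]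
    constructor
    · intro hvw
      obtain ⟨s, ⟨hs, hv, hw⟩, -⟩ := hP.2 v w hvw
      exact ⟨s, ⟨hs, hv⟩, hvw.ne', hw⟩
    · rintro ⟨s, ⟨hs, hv⟩, hwv, hw⟩
      exact hP.1 s hs hv hw hwv.symm
  have hdisj : (↑{s ∈ P | v ∈ s} : Set (Finset V)).PairwiseDisjoint (·.erase v) := by
    intro s₁ hs₁ s₂ hs₂ hne
    rw [mem_coe, mem_filter] at hs₁ hs₂
    refine disjoint_left.2 fun w hw₁ hw₂ => ?_
    rw [mem_erase] at hw₁ hw₂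
    refine (hP.card_inter_le_one hs₁.1 hs₂.1 hne).not_gt (one_lt_card.2 ?_)
    exact ⟨v, mem_inter.2 ⟨hs₁.2, hs₂.2⟩, w, mem_inter.2 ⟨hw₁.2, hw₂.2⟩, hw₁.1.symm⟩
  rw [← card_neighborFinset_eq_degree, hnbr, card_biUnion hdisj]
  exact sum_congr rfl fun s hs => card_erase_of_mem (mem_filter.1 hs).2

lemma IsCliquePartition.sum_card_mul_card_sub_one (hP : IsCliquePartition G P) :
    ∑ s ∈ P, #s * (#s - 1) = 2 * #G.edgeFinset := by
  simp only [← sum_sum_filter_mem, ← hP.degree_eq_sum, sum_degrees_eq_twice_card_edges]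

lemma IsCliquePartition.degree_le_mul {t : ℕ} (hP : IsCliquePartition G P)
    (hsize : ∀ s ∈ P, #s ≤ t) (v : V) : G.degree v ≤ (t - 1) * #{s ∈ P | v ∈ s} := by
  rw [hP.degree_eq_sum, mul_comm, ← smul_eq_mul, ← sum_const]
  exact sum_le_sum fun s hs => Nat.sub_le_sub_right (hsize s (mem_filter.1 hs).1) 1

lemma IsCliquePartition.degree_eq_mul {t : ℕ} (hP : IsCliquePartition G P)
    (hsize : ∀ s ∈ P, #s = t) (v : V) : G.degree v = (t - 1) * #{s ∈ P | v ∈ s} := by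
  rw [hP.degree_eq_sum, mul_comm, ← smul_eq_mul, ← sum_const]
  exact sum_congr rfl fun s hs => by rw [hsize s (mem_filter.1 hs).1]

lemma IsCliquePartition.card_eq_of_degree_eq_mul {t : ℕ} (hP : IsCliquePartition G P)
    (hsize : ∀ s ∈ P, #s ≤ t) {v : V} (hv : G.degree v = (t - 1) * #{s ∈ P | v ∈ s})
    {s : Finset V} (hs : s ∈ P) (hvs : v ∈ s) : #s = t := by
  rw [hP.degree_eq_sum, mul_comm, ← smul_eq_mul, ← sum_const] at hv
  have hst := (sum_eq_sum_iff_of_le fun s hs =>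
    Nat.sub_le_sub_right (hsize s (mem_filter.1 hs).1) 1).1 hv s (mem_filter.2 ⟨hs, hvs⟩)
  have hsle := hsize s hs
  have hspos := card_pos.2 ⟨v, hvs⟩
  omega

end CliquePartition

section Extension

variable [Fintype V] [DecidableEq V] {G : SimpleGraph V}

lemma exists_isCliquePartition_superset {F : Finset (Finset V)}
    (hF : ∀ s ∈ F, G.IsClique (s : Set V))
    (hF' : ∀ s₁ ∈ F, ∀ s₂ ∈ F, s₁ ≠ s₂ → #(s₁ ∩ s₂) ≤ 1) :
    ∃ P, IsCliquePartition G P ∧ F ⊆ P ∧ ∀ s ∈ P \ F, #s = 2 := by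
  classical
  set L : Finset (Finset V) := {e ∈ univ.powersetCard 2 | G.IsClique (e : Set V) ∧ ∀ s ∈ F, ¬e ⊆ s}
  have hL : ∀ {e : Finset V} {u v : V}, e ∈ L → u ∈ e → v ∈ e → u ≠ v → e = {u, v} :=
    fun he hu hv huv => (eq_of_subset_of_card_le (insert_subset hu (singleton_subset_iff.2 hv))
      (by rw [card_pair huv, (mem_powersetCard.1 (mem_filter.1 he).1).2])).symm
  refine ⟨F ∪ L, ⟨fun s hs => ?_, fun u v huv => ?_⟩, subset_union_left, fun s hs => ?_⟩
  · rcases mem_union.1 hs with hs | hs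
    exacts [hF s hs, (mem_filter.1 hs).2.1]
  · by_cases hcov : ∃ s ∈ F, u ∈ s ∧ v ∈ s
    · obtain ⟨s, hs, hu, hv⟩ := hcov
      refine ⟨s, ⟨mem_union_left _ hs, hu, hv⟩, fun y ⟨hy, hyu, hyv⟩ => ?_⟩
      rcases mem_union.1 hy with hy | hy
      · by_contra hne
        exact (hF' y hy s hs hne).not_gt
          (one_lt_card.2 ⟨u, mem_inter.2 ⟨hyu, hu⟩, v, mem_inter.2 ⟨hyv, hv⟩, huv.ne⟩)
      · refine absurd ?_ ((mem_filter.1 hy).2.2 s hs)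
        rw [hL hy hyu hyv huv.ne]
        exact insert_subset hu (singleton_subset_iff.2 hv)
    · push Not at hcov
      have hpair : ({u, v} : Finset V) ∈ L := by
        refine mem_filter.2 ⟨mem_powersetCard.2 ⟨subset_univ _, card_pair huv.ne⟩, ?_, ?_⟩
        · rw [coe_pair]; exact isClique_pair.2 fun _ => huv
        · exact fun s hs h => hcov s hs (h (mem_insert_self _ _)) (h (by simp))
      refine ⟨{u, v}, ⟨mem_union_right _ hpair, by simp, by simp⟩, fun y ⟨hy, hyu, hyv⟩ => ?_⟩
      rcases mem_union.1 hy with hy | hy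
      exacts [absurd hyv (hcov y hy hyu), hL hy hyu hyv huv.ne]
  · obtain ⟨hs, hsF⟩ := mem_sdiff.1 hs
    rcases mem_union.1 hs with hs | hs
    exacts [absurd hs hsF, (mem_powersetCard.1 (mem_filter.1 hs).1).2]

lemma isGreatest_kT (G : SimpleGraph V) (t : ℕ) :
    IsGreatest {m | ∃ S : Finset (Finset V), (∀ s ∈ S, G.IsNClique t s) ∧
      (∀ s₁ ∈ S, ∀ s₂ ∈ S, s₁ ≠ s₂ → #(s₁ ∩ s₂) ≤ 1) ∧ #S = m} (kT G t) := by
  have hbdd : BddAbove {m | ∃ S : Finset (Finset V), (∀ s ∈ S, G.IsNClique t s) ∧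
      (∀ s₁ ∈ S, ∀ s₂ ∈ S, s₁ ≠ s₂ → #(s₁ ∩ s₂) ≤ 1) ∧ #S = m} :=
    ⟨Fintype.card (Finset V), by rintro _ ⟨S, -, -, rfl⟩; exact card_le_univ S⟩
  exact ⟨Nat.sSup_mem ⟨0, ∅, by simp⟩ hbdd, fun _ hm => le_csSup hbdd hm⟩

lemma exists_isCliquePartition_card_filter_eq_kT {t : ℕ} (ht : 2 < t) :
    ∃ P, IsCliquePartition G P ∧ (∀ s ∈ P, #s = t ∨ #s = 2) ∧ #{s ∈ P | #s = t} = kT G t := by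
  obtain ⟨F, hF, hFdisj, hFk⟩ := (isGreatest_kT G t).1
  obtain ⟨P, hP, hFP, hPF⟩ :=
    exists_isCliquePartition_superset (fun s hs => (hF s hs).isClique) hFdisj
  have hPF' : ∀ s ∈ P, s ∉ F → #s = 2 := fun s hs hsF => hPF s (mem_sdiff.2 ⟨hs, hsF⟩)
  refine ⟨P, hP, fun s hs => ?_, ?_⟩
  · by_cases hsF : s ∈ F
    exacts [.inl (hF s hsF).card_eq, .inr (hPF' s hs hsF)]
  · rw [← hFk]
    congr 1
    ext s
    refine ⟨fun h => by_contra fun hsF => ?_, fun h => mem_filter.2 ⟨hFP h, (hF s h).card_eq⟩⟩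
    obtain ⟨hs, hst⟩ := mem_filter.1 h
    exact ht.ne' (hst.symm.trans (hPF' s hs hsF))

lemma IsCliquePartition.card_le_kT {P : Finset (Finset V)} (hP : IsCliquePartition G P)
    {t : ℕ} (hsize : ∀ s ∈ P, #s = t) : #P ≤ kT G t :=
  (isGreatest_kT G t).2 ⟨P, fun s hs => ⟨hP.1 s hs, hsize s hs⟩,
    fun _ h₁ _ h₂ hne => hP.card_inter_le_one h₁ h₂ hne, rfl⟩

end Extension

section SpectralBound

variable [Fintype V] {G : SimpleGraph V} [DecidableRel G.Adj] {t : ℕ}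

lemma one_le_ceil_minDegree_div (hδ : 0 < G.minDegree) (ht : 2 ≤ t) :
    1 ≤ ⌈(G.minDegree : ℝ) / (t - 1)⌉ :=
  Int.one_le_ceil_iff.2 <| div_pos (by exact_mod_cast hδ) <| by
    linarith [show (2 : ℝ) ≤ t by exact_mod_cast ht]

variable [DecidableEq V] {P : Finset (Finset V)}

noncomputable def kTSpectralBound (G : SimpleGraph V) [DecidableRel G.Adj] (t : ℕ) : ℝ :=
  2 * #G.edgeFinset - specRad G - (Fintype.card V - t + 1) * ⌈(G.minDegree : ℝ) / (t - 1)⌉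

namespace IsCliquePartition

lemma sum_card_filter_mem_add_mul (hP : IsCliquePartition G P) (ht : 2 ≤ t)
    (hsize : ∀ s ∈ P, #s = t ∨ #s = 2) :
    ∑ v, #{s ∈ P | v ∈ s} + t * (t - 2) * #{s ∈ P | #s = t} = 2 * #G.edgeFinset := by
  rw [sum_card_filter_mem, ← hP.sum_card_mul_card_sub_one, card_eq_sum_ones, mul_sum, sum_filter,
    ← sum_add_distrib]
  obtain ⟨k, rfl⟩ := Nat.exists_eq_add_of_le ht
  refine sum_congr rfl fun s hs => ?_
  rcases hsize s hs with h | h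
  · rw [h, if_pos rfl, Nat.add_sub_cancel_left, show 2 + k - 1 = k + 1 by omega]
    ring
  · rw [h]
    split_ifs with h'
    · simp [← h']
    · simp

lemma cast_degree_le_mul (hP : IsCliquePartition G P) (ht : 1 ≤ t) (hsize : ∀ s ∈ P, #s ≤ t)
    (v : V) : (G.degree v : ℝ) ≤ (t - 1) * #{s ∈ P | v ∈ s} := by
  have := hP.degree_le_mul hsize v
  rw [← Nat.cast_one, ← Nat.cast_sub ht]
  exact_mod_cast this

lemma ceil_le_card_filter_mem (hP : IsCliquePartition G P) (ht : 2 ≤ t)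
    (hsize : ∀ s ∈ P, #s ≤ t) (v : V) :
    ⌈(G.minDegree : ℝ) / (t - 1)⌉ ≤ #{s ∈ P | v ∈ s} := by
  have ht' : (0 : ℝ) < t - 1 := by linarith [show (2 : ℝ) ≤ t by exact_mod_cast ht]
  rw [Int.ceil_le, div_le_iff₀ ht', Int.cast_natCast, mul_comm]
  exact (Nat.cast_le.2 (G.minDegree_le_degree v)).trans (hP.cast_degree_le_mul (by omega) hsize v)

lemma kTSpectralBound_sub_mul_eq (hP : IsCliquePartition G P) (ht : 2 ≤ t)
    (hsize : ∀ s ∈ P, #s = t ∨ #s = 2) :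
    kTSpectralBound G t - #{s ∈ P | #s = t} * (t * (t - 2)) =
      (t - 1) * ⌈(G.minDegree : ℝ) / (t - 1)⌉ +
        ∑ v, ((#{s ∈ P | v ∈ s} : ℝ) - ⌈(G.minDegree : ℝ) / (t - 1)⌉) - specRad G := by
  have h : ((∑ v, #{s ∈ P | v ∈ s} + t * (t - 2) * #{s ∈ P | #s = t} : ℕ) : ℝ) =
      (2 * #G.edgeFinset : ℕ) := congrArg _ (hP.sum_card_filter_mem_add_mul ht hsize)
  push_cast [Nat.cast_sub ht] at h
  rw [kTSpectralBound, sum_sub_distrib, sum_const, card_univ, nsmul_eq_mul]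
  linarith

lemma mul_le_kTSpectralBound (hP : IsCliquePartition G P) (hδ : 0 < G.minDegree) (ht : 2 ≤ t)
    (hsize : ∀ s ∈ P, #s = t ∨ #s = 2) :
    #{s ∈ P | #s = t} * ((t : ℝ) * (t - 2)) ≤ kTSpectralBound G t := by
  have hsize' : ∀ s ∈ P, #s ≤ t := fun s hs => by rcases hsize s hs with h | h <;> omega
  have hρ := specRad_le_of_degree_le (G := G) (r := t - 1)
    (a := ⌈(G.minDegree : ℝ) / (t - 1)⌉) (by linarith [show (2 : ℝ) ≤ t by exact_mod_cast ht])
    (by exact_mod_cast one_le_ceil_minDegree_div hδ ht)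
    (fun v => by exact_mod_cast hP.ceil_le_card_filter_mem ht hsize' v)
    (hP.cast_degree_le_mul (by omega) hsize')
  linarith [hP.kTSpectralBound_sub_mul_eq ht hsize]

lemma isRegular_and_card_eq_of_mul_eq_kTSpectralBound (hP : IsCliquePartition G P)
    (hconn : G.Connected) (hδ : 0 < G.minDegree) (ht : 2 ≤ t) (hsize : ∀ s ∈ P, #s = t ∨ #s = 2)
    (heq : #{s ∈ P | #s = t} * ((t : ℝ) * (t - 2)) = kTSpectralBound G t) :
    (∃ d, G.IsRegularOfDegree d) ∧ ∀ s ∈ P, #s = t := by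
  have hsize' : ∀ s ∈ P, #s ≤ t := fun s hs => by rcases hsize s hs with h | h <;> omega
  have htight := hconn.eq_and_degree_eq_of_specRad_eq (r := t - 1)
    (a := ⌈(G.minDegree : ℝ) / (t - 1)⌉) (by linarith [show (2 : ℝ) ≤ t by exact_mod_cast ht])
    (by exact_mod_cast one_le_ceil_minDegree_div hδ ht)
    (fun v => by exact_mod_cast hP.ceil_le_card_filter_mem ht hsize' v)
    (hP.cast_degree_le_mul (by omega) hsize')
    (by linarith [hP.kTSpectralBound_sub_mul_eq ht hsize])
  have hdeg : ∀ v, G.degree v = (t - 1) * #{s ∈ P | v ∈ s} := fun v => by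
    obtain ⟨hc, hd⟩ := htight v
    rw [← hc, ← Nat.cast_one, ← Nat.cast_sub (by omega : 1 ≤ t)] at hd
    exact_mod_cast hd
  have := hconn.nonempty
  refine ⟨⟨G.degree (Classical.arbitrary V), fun v => ?_⟩, fun s hs => ?_⟩
  · exact_mod_cast (htight v).2.trans (htight _).2.symm
  · obtain ⟨v, hv⟩ : s.Nonempty := card_pos.1 (by rcases hsize s hs with h | h <;> omega)
    exact hP.card_eq_of_degree_eq_mul hsize' (hdeg v) hs hv

lemma mul_eq_kTSpectralBound [Nonempty V] (hP : IsCliquePartition G P) (ht : 2 ≤ t) {d : ℕ}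
    (hd : G.IsRegularOfDegree d) (hsize : ∀ s ∈ P, #s = t) :
    #P * ((t : ℝ) * (t - 2)) = kTSpectralBound G t := by
  have hc : ∀ v, d = (t - 1) * #{s ∈ P | v ∈ s} := fun v => hd v ▸ hP.degree_eq_mul hsize v
  set q := #{s ∈ P | Classical.arbitrary V ∈ s}
  have hcq : ∀ v, #{s ∈ P | v ∈ s} = q := fun v =>
    Nat.eq_of_mul_eq_mul_left (by omega) ((hc v).symm.trans (hc _))
  have hceil : ⌈(G.minDegree : ℝ) / (t - 1)⌉ = q := by
    have ht' : (t : ℝ) - 1 ≠ 0 := by linarith [show (2 : ℝ) ≤ t by exact_mod_cast ht]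
    rw [hd.minDegree_eq, hc (Classical.arbitrary V), Nat.cast_mul, Nat.cast_sub (by omega),
      Nat.cast_one, mul_div_cancel_left₀ _ ht', Int.ceil_natCast]
  have hρ : specRad G = (t - 1) * q := by
    rw [specRad_eq_of_isRegularOfDegree hd, hc (Classical.arbitrary V), Nat.cast_mul,
      Nat.cast_sub (by omega), Nat.cast_one]
  have hk : {s ∈ P | #s = t} = P := filter_true_of_mem hsize
  have hbound := hP.kTSpectralBound_sub_mul_eq ht fun s hs => .inl (hsize s hs)
  simp only [hk, hceil, hcq, hρ, Int.cast_natCast, sub_self, sum_const_zero] at hbound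
  linarith

end IsCliquePartition

end SpectralBound

/-- Equality in the spectral upper bound for `k_t(G)` holds if and
only if `G` is regular and admits a `K_t`-decomposition. -/
theorem kT_eq_specRad_iff [Fintype V] [DecidableEq V] (G : SimpleGraph V) [DecidableRel G.Adj]
    (t : ℕ) (ht : 2 < t) (hconn : G.Connected) (hm : 1 ≤ G.edgeFinset.card) :
    (kT G t : ℝ) = (2 * (G.edgeFinset.card : ℝ) - specRad G -
        ((Fintype.card V : ℝ) - t + 1) * (⌈(G.minDegree : ℝ) / ((t : ℝ) - 1)⌉ : ℤ)) /
      ((t : ℝ) * ((t : ℝ) - 2)) ↔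
      (∃ d, G.IsRegularOfDegree d) ∧
        ∃ P : Finset (Finset V), IsCliquePartition G P ∧ ∀ s ∈ P, s.card = t := by
  have hδ := hconn.minDegree_pos hm
  obtain ⟨P, hP, hsize, hk⟩ := exists_isCliquePartition_card_filter_eq_kT (G := G) ht
  have htt : (0 : ℝ) < t * (t - 2) :=
    mul_pos (by positivity) (by linarith [show (2 : ℝ) < t by exact_mod_cast ht])
  change _ = kTSpectralBound G t / _ ↔ _
  rw [eq_div_iff htt.ne', ← hk]
  refine ⟨fun h => ?_, fun ⟨⟨d, hd⟩, Q, hQ, hQt⟩ => ?_⟩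
  · obtain ⟨hreg, hPt⟩ :=
      hP.isRegular_and_card_eq_of_mul_eq_kTSpectralBound hconn hδ ht.le hsize h
    exact ⟨hreg, P, hP, hPt⟩
  · have := hconn.nonempty
    have hQk : (#Q : ℝ) ≤ #{s ∈ P | #s = t} := by exact_mod_cast hk ▸ hQ.card_le_kT hQt
    refine le_antisymm (hP.mul_le_kTSpectralBound hδ ht.le hsize) ?_
    rw [← hQ.mul_eq_kTSpectralBound ht.le hd hQt]
    exact mul_le_mul_of_nonneg_right hQk htt.le
end

section
/- Let t ≥ 2 be an integer, let G be a finite connected simple graph with at least one edge, and let 𝒬 be a clique partition of G in which every clique has at most t vertices. Then |𝒬| ≥ ρ(G) − t + 1 + min_{u∈V(G)} d_u^𝒬. -/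
/-! Let `N` be the vertex–clique incidence matrix of `𝒬`. Then `N Nᵀ = A + diag (d_u^𝒬)`, while
`Nᵀ N = (|s ∩ s'|)_{s, s' ∈ 𝒬}` has row sums at most `t + |𝒬| - 1`, because distinct cliques of a
clique partition share at most one vertex. The quadratic forms of `N Nᵀ` and `Nᵀ N` have the same
maximum on the unit sphere, so every eigenvalue `μ` of `A` satisfies
`μ + min_u d_u^𝒬 ≤ t + |𝒬| - 1`. -/

open Finset SimpleGraph Polynomial

variable {V : Type*}

open Matrix

namespace Matrix

variable {m n : Type*} [Fintype m] [Fintype n]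

lemma le_of_hasEigenvalue_toLin' [DecidableEq n] {A : Matrix n n ℝ} {μ c : ℝ}
    (hμ : Module.End.HasEigenvalue (toLin' A) μ) (h : ∀ x, x ⬝ᵥ A *ᵥ x ≤ c * (x ⬝ᵥ x)) :
    μ ≤ c := by
  obtain ⟨x, hx⟩ := hμ.exists_hasEigenvector
  have hAx : A *ᵥ x = μ • x := by simpa [toLin'_apply] using hx.apply_eq_smul
  have hpos : 0 < x ⬝ᵥ x := by simpa using dotProduct_star_self_pos_iff.mpr hx.2
  have hx := h x
  rw [hAx, dotProduct_smul, smul_eq_mul] at hx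
  exact le_of_mul_le_mul_right hx hpos

lemma dotProduct_mulVec_le_of_sum_le {M : Matrix n n ℝ} (hM : M.IsSymm)
    (hM₀ : ∀ i j, 0 ≤ M i j) {R : ℝ} (hrow : ∀ i, ∑ j, M i j ≤ R) (y : n → ℝ) :
    y ⬝ᵥ M *ᵥ y ≤ R * (y ⬝ᵥ y) := by
  calc y ⬝ᵥ M *ᵥ y = ∑ i, ∑ j, M i j * (y i * y j) := by
        simp only [dotProduct, mulVec, mul_sum]
        exact sum_congr rfl fun i _ => sum_congr rfl fun j _ => by ring
    _ ≤ ∑ i, ∑ j, (M i j * y i ^ 2 + M j i * y j ^ 2) / 2 := by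
        gcongr with i _ j _
        rw [hM.apply i j]
        nlinarith [mul_nonneg (hM₀ i j) (sq_nonneg (y i - y j))]
    _ = ∑ i, (∑ j, M i j) * y i ^ 2 := by
        simp only [add_div, sum_add_distrib, sum_mul]
        rw [sum_comm (f := fun i j => M j i * y j ^ 2 / 2), ← sum_add_distrib]
        refine sum_congr rfl fun i _ => ?_
        rw [← sum_add_distrib]
        exact sum_congr rfl fun j _ => by ring
    _ ≤ ∑ i, R * y i ^ 2 := by gcongr with i; exact hrow i
    _ = R * (y ⬝ᵥ y) := by simp only [dotProduct, mul_sum, sq]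

lemma dotProduct_mul_transpose_mulVec_le {N : Matrix m n ℝ} {R : ℝ} (hR : 0 ≤ R)
    (h : ∀ y, y ⬝ᵥ (Nᵀ * N) *ᵥ y ≤ R * (y ⬝ᵥ y)) (x : m → ℝ) :
    x ⬝ᵥ (N * Nᵀ) *ᵥ x ≤ R * (x ⬝ᵥ x) := by
  set y := Nᵀ *ᵥ x
  have hxx : 0 ≤ x ⬝ᵥ x := by simpa using dotProduct_star_self_nonneg x
  have hT : x ⬝ᵥ (N * Nᵀ) *ᵥ x = y ⬝ᵥ y := by
    rw [← mulVec_mulVec, dotProduct_mulVec, ← mulVec_transpose]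
  have hNy : y ⬝ᵥ (Nᵀ * N) *ᵥ y = N *ᵥ y ⬝ᵥ N *ᵥ y := by
    rw [← mulVec_mulVec, dotProduct_mulVec, vecMul_transpose]
  have hCS : (y ⬝ᵥ y) ^ 2 ≤ (x ⬝ᵥ x) * (R * (y ⬝ᵥ y)) := by
    have hyy : x ⬝ᵥ N *ᵥ y = y ⬝ᵥ y := by
      rw [dotProduct_mulVec, ← mulVec_transpose]
    calc (y ⬝ᵥ y) ^ 2 ≤ (x ⬝ᵥ x) * (N *ᵥ y ⬝ᵥ N *ᵥ y) := by
          rw [← hyy]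
          simpa only [dotProduct, sq] using sum_mul_sq_le_sq_mul_sq univ x (N *ᵥ y)
      _ ≤ (x ⬝ᵥ x) * (R * (y ⬝ᵥ y)) := by rw [← hNy]; gcongr; exact h y
  rw [hT]
  rcases (show 0 ≤ y ⬝ᵥ y by simpa using dotProduct_star_self_nonneg y).eq_or_lt with hy | hy
  · rw [← hy]; exact mul_nonneg hR hxx
  · nlinarith

end Matrix

section incMatrix

variable [DecidableEq V] (R : Type*) [NonAssocSemiring R] (P : Finset (Finset V))

def Finset.incMatrix : Matrix V P R := fun v s => if v ∈ (s : Finset V) then 1 else 0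

lemma Finset.incMatrix_mul_transpose_apply (v w : V) :
    (P.incMatrix R * (P.incMatrix R)ᵀ) v w = #{s ∈ P | v ∈ s ∧ w ∈ s} := by
  simp only [incMatrix, mul_apply, transpose_apply, mul_ite, mul_one, mul_zero,
    ← ite_and, and_comm (a := w ∈ _)]
  rw [sum_coe_sort P (fun s => if v ∈ s ∧ w ∈ s then (1 : R) else 0), sum_boole]

lemma Finset.transpose_mul_incMatrix_apply [Fintype V] (s s' : P) :
    ((P.incMatrix R)ᵀ * P.incMatrix R) s s' = #((s : Finset V) ∩ s') := by
  simp only [incMatrix, mul_apply, transpose_apply, mul_ite, mul_one, mul_zero,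
    ← ite_and, and_comm (a := _ ∈ (s' : Finset V)), sum_boole]
  congr 2
  ext v
  simp

end incMatrix

namespace IsCliquePartition

variable [DecidableEq V] {G : SimpleGraph V} {P : Finset (Finset V)}

lemma card_inter_le_one_s13 (hP : IsCliquePartition G P) {s s' : Finset V} (hs : s ∈ P)
    (hs' : s' ∈ P) (hne : s ≠ s') : #(s ∩ s') ≤ 1 := by
  by_contra! h
  obtain ⟨u, hu, v, hv, huv⟩ := one_lt_card.mp h
  rw [mem_inter] at hu hv
  obtain ⟨_, _, huniq⟩ := hP.2 u v (hP.1 s hs hu.1 hv.1 huv)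
  exact hne ((huniq s ⟨hs, hu.1, hv.1⟩).trans (huniq s' ⟨hs', hu.2, hv.2⟩).symm)

lemma card_filter_mem_mem (hP : IsCliquePartition G P) {v w : V} (hvw : v ≠ w)
    [Decidable (G.Adj v w)] :
    #{s ∈ P | v ∈ s ∧ w ∈ s} = if G.Adj v w then 1 else 0 := by
  split_ifs with hadj
  · obtain ⟨s₀, hs₀, huniq⟩ := hP.2 v w hadj
    rw [card_eq_one]
    exact ⟨s₀, eq_singleton_iff_unique_mem.mpr
      ⟨mem_filter.mpr hs₀, fun s hs => huniq s (mem_filter.mp hs)⟩⟩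
  · rw [card_eq_zero, filter_eq_empty_iff]
    rintro s hs ⟨hv, hw⟩
    exact hadj (hP.1 s hs hv hw hvw)

lemma incMatrix_mul_transpose [Fintype V] [DecidableRel G.Adj] (hP : IsCliquePartition G P)
    (R : Type*) [NonAssocSemiring R] :
    P.incMatrix R * (P.incMatrix R)ᵀ =
      G.adjMatrix R + diagonal fun v => (#{s ∈ P | v ∈ s} : R) := by
  ext v w
  rw [Finset.incMatrix_mul_transpose_apply, Matrix.add_apply, SimpleGraph.adjMatrix_apply]
  rcases eq_or_ne v w with rfl | hvw
  · simp
  · rw [hP.card_filter_mem_mem hvw, diagonal_apply_ne _ hvw, add_zero]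
    split_ifs <;> simp

lemma sum_card_inter_add_one_le (hP : IsCliquePartition G P) {t : ℕ} (hsize : ∀ s ∈ P, #s ≤ t)
    {s : Finset V} (hs : s ∈ P) : ∑ s' ∈ P, #(s ∩ s') + 1 ≤ t + #P := by
  rw [← add_sum_erase P _ hs, inter_self, ← card_erase_add_one hs]
  have hothers : ∑ s' ∈ P.erase s, #(s ∩ s') ≤ #(P.erase s) :=
    card_eq_sum_ones (P.erase s) ▸ sum_le_sum fun s' hs' =>
      hP.card_inter_le_one_s13 hs (mem_of_mem_erase hs') (ne_of_mem_erase hs').symm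
  linarith [hsize s hs]

lemma dotProduct_adjMatrix_mulVec_le [Fintype V] [DecidableRel G.Adj]
    (hP : IsCliquePartition G P) {t : ℕ} (ht : 1 ≤ t) (hsize : ∀ s ∈ P, #s ≤ t) {δ : ℝ}
    (hδ : ∀ v, δ ≤ #{s ∈ P | v ∈ s}) (x : V → ℝ) :
    x ⬝ᵥ G.adjMatrix ℝ *ᵥ x ≤ (t + #P - 1 - δ) * (x ⬝ᵥ x) := by
  have hgram :
      ∀ y, y ⬝ᵥ ((P.incMatrix ℝ)ᵀ * P.incMatrix ℝ) *ᵥ y ≤ (t + #P - 1) * (y ⬝ᵥ y) := by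
    refine dotProduct_mulVec_le_of_sum_le (by simp [IsSymm, transpose_mul])
      (fun s s' => ?_) (fun s => ?_)
    · rw [Finset.transpose_mul_incMatrix_apply]; positivity
    · simp only [Finset.transpose_mul_incMatrix_apply]
      rw [sum_coe_sort P (fun s' => ((#((s : Finset V) ∩ s') : ℕ) : ℝ))]
      have := hP.sum_card_inter_add_one_le hsize s.2
      rw [le_sub_iff_add_le]
      exact_mod_cast this
  have hdiag : δ * (x ⬝ᵥ x) ≤ x ⬝ᵥ (diagonal fun v => (#{s ∈ P | v ∈ s} : ℝ)) *ᵥ x := by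
    simp only [mulVec_diagonal, dotProduct, mul_sum]
    exact sum_le_sum fun v _ => by nlinarith [hδ v, mul_self_nonneg (x v)]
  have hR : (0 : ℝ) ≤ t + #P - 1 := by
    have : (1 : ℝ) ≤ t := by exact_mod_cast ht
    linarith [(#P).cast_nonneg (α := ℝ)]
  have := dotProduct_mul_transpose_mulVec_le hR hgram x
  rw [hP.incMatrix_mul_transpose, add_mulVec, dotProduct_add] at this
  linarith

end IsCliquePartition

theorem card_cliquePartition_ge_general [Fintype V] [DecidableEq V] (G : SimpleGraph V)
    [DecidableRel G.Adj] (t : ℕ) (ht : 2 ≤ t) (hconn : G.Connected)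
    (P : Finset (Finset V)) (hP : IsCliquePartition G P) (hsize : ∀ s ∈ P, s.card ≤ t) :
    specRad G - t + 1 +
      ((Finset.univ.inf' (Finset.univ_nonempty_iff.mpr hconn.nonempty)
        (fun u => (P.filter (fun s => u ∈ s)).card) : ℕ) : ℝ) ≤ (P.card : ℝ) := by
  set δ := Finset.univ.inf' (Finset.univ_nonempty_iff.mpr hconn.nonempty)
    (fun u => #{s ∈ P | u ∈ s})
  have hδ : ∀ v, (δ : ℝ) ≤ #{s ∈ P | v ∈ s} := fun v => by
    exact_mod_cast inf'_le _ (mem_univ v)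
  obtain ⟨v₀⟩ := hconn.nonempty
  have hδP : (δ : ℝ) ≤ #P := (hδ v₀).trans (by exact_mod_cast card_filter_le _ _)
  have hρ : specRad G ≤ t + #P - 1 - δ :=
    Real.sSup_le (fun μ hμ => le_of_hasEigenvalue_toLin' hμ
      (hP.dotProduct_adjMatrix_mulVec_le (by omega) hsize hδ))
      (by linarith [show (2 : ℝ) ≤ t by exact_mod_cast ht])
  linarith

/-- For any clique partition `𝒬` of a connected graph `G` in which
every clique has at most `t` vertices, `|𝒬| ≥ ρ(G) − t + 1 + min_{u} d_u^𝒬`. -/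
theorem card_cliquePartition_ge [Fintype V] [DecidableEq V] (G : SimpleGraph V)
    [DecidableRel G.Adj] (t : ℕ) (ht : 2 ≤ t) (hconn : G.Connected)
    (hedge : G.edgeSet.Nonempty)
    (P : Finset (Finset V)) (hP : IsCliquePartition G P) (hsize : ∀ s ∈ P, s.card ≤ t) :
    specRad G - t + 1 +
      ((Finset.univ.inf' (Finset.univ_nonempty_iff.mpr hconn.nonempty)
        (fun u => (P.filter (fun s => u ∈ s)).card) : ℕ) : ℝ) ≤ (P.card : ℝ) :=
  card_cliquePartition_ge_general G t ht hconn P hP hsize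
end

section
/- Let t ≥ 2 and k ≥ 1 be integers, and let G be a finite simple graph on n vertices admitting a K_t-decomposition 𝒬 = {Q_1, …, Q_v} such that |Q_i ∩ Q_j| = 1 for all i ≠ j and every vertex of G lies in exactly k cliques of 𝒬. Then the characteristic polynomial of the adjacency matrix of G is (x − k(t−1))·(x − (t−1−k))^{v−1}·(x + k)^{n−v}; in particular, G is k(t−1)-regular and its eigenvalues are k(t−1) with multiplicity 1, t−1−k with multiplicity v−1, and −k with multiplicity n−v. -/
open Finset SimpleGraph Polynomial

variable {V : Type*}

/-! With `N` the vertex–clique incidence matrix, the hypotheses say `N Nᵀ = A + k I` and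
`Nᵀ N = (t - 1) I + J`. As `N Nᵀ` and `Nᵀ N` have the same characteristic polynomial up to a
power of `X`, the spectrum of `A` is read off from that of `(t - 1) I + J`: the eigenvalue `t - 1`
with multiplicity `v - 1` and the simple eigenvalue `t - 1 + v`. Double counting incidences with a
fixed clique gives `v = t (k - 1) + 1`, and `Nᵀ N` being nonsingular gives `v ≤ n`. -/

namespace Matrix

variable {R : Type*} [CommRing R] {m n : Type*} [Fintype m] [Fintype n] [DecidableEq m]
  [DecidableEq n]

theorem card_le_card_of_eval_zero_charpoly_mul_ne_zero (A : Matrix m n R) (B : Matrix n m R)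
    (h : (B * A).charpoly.eval 0 ≠ 0) : Fintype.card n ≤ Fintype.card m := by
  by_contra! hlt
  have hcomm : X ^ Fintype.card m * (X ^ (Fintype.card n - Fintype.card m) * (A * B).charpoly) =
      X ^ Fintype.card m * (B * A).charpoly := by
    rw [← mul_assoc, ← pow_add, Nat.add_sub_cancel' hlt.le, charpoly_mul_comm']
  rw [← (isRegular_X_pow _).left.eq_iff.mp hcomm] at h
  simp [Nat.sub_ne_zero_of_lt hlt] at h

theorem charpoly_add_scalar (M : Matrix n n R) (c : R) :
    (M + scalar n c).charpoly = M.charpoly.comp (X - C c) := by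
  simpa [sub_eq_add_neg] using charpoly_sub_scalar M (-c)

theorem charpoly_vecMulVec_one_add_scalar [Nonempty n] (c : R) :
    (vecMulVec 1 1 + scalar n c).charpoly =
      (X - C c) ^ (Fintype.card n - 1) * (X - C c - C (Fintype.card n : R)) := by
  obtain ⟨d, hd⟩ := Nat.exists_eq_add_one.mpr (Fintype.card_pos (α := n))
  have hdot : (1 : n → R) ⬝ᵥ 1 = Fintype.card n := by simp
  rw [charpoly_add_scalar, charpoly_vecMulVec, hdot, hd]
  simp [pow_succ, smul_eq_C_mul]
  ring

end Matrix

open Matrix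

section Incidence

variable [DecidableEq V] (R : Type*) (P : Finset (Finset V))

def incidenceMatrix [Zero R] [One R] : Matrix V P R :=
  of fun u s => if u ∈ (s : Finset V) then 1 else 0

variable {R P}

theorem incidenceMatrix_mul_transpose_apply [NonAssocSemiring R] (u w : V) :
    (incidenceMatrix R P * (incidenceMatrix R P)ᵀ) u w = #{s ∈ P | u ∈ s ∧ w ∈ s} := by
  simp only [incidenceMatrix, mul_apply, transpose_apply, of_apply, mul_ite, mul_one, mul_zero,
    ← ite_and, and_comm (a := w ∈ _)]
  rw [sum_coe_sort P (fun s => if u ∈ s ∧ w ∈ s then (1 : R) else 0), sum_boole]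

theorem transpose_mul_incidenceMatrix_apply [NonAssocSemiring R] [Fintype V] (s s' : P) :
    ((incidenceMatrix R P)ᵀ * incidenceMatrix R P) s s' = #((s : Finset V) ∩ s') := by
  simp only [incidenceMatrix, mul_apply, transpose_apply, of_apply, mul_ite, mul_one, mul_zero,
    ← ite_and, sum_boole]
  congr 2
  ext x
  simp [and_comm]

variable (R) in
theorem transpose_mul_incidenceMatrix_of_card_inter_eq_one [Ring R] [Fintype V] {t : ℕ}
    (hcard : ∀ s ∈ P, #s = t) (hint : ∀ s₁ ∈ P, ∀ s₂ ∈ P, s₁ ≠ s₂ → #(s₁ ∩ s₂) = 1) :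
    (incidenceMatrix R P)ᵀ * incidenceMatrix R P = vecMulVec 1 1 + scalar P ((t : R) - 1) := by
  ext s s'
  rw [transpose_mul_incidenceMatrix_apply]
  obtain rfl | hss := eq_or_ne s s'
  · simp [hcard s s.2]
  · simp [hint s s.2 s' s'.2 (Subtype.coe_ne_coe.mpr hss), hss]

end Incidence

namespace Finset

variable [DecidableEq V] {P : Finset (Finset V)} {t k : ℕ}

theorem card_add_card_sub_one_eq_mul (hcard : ∀ s ∈ P, #s = t)
    (hint : ∀ s₁ ∈ P, ∀ s₂ ∈ P, s₁ ≠ s₂ → #(s₁ ∩ s₂) = 1) (hreg : ∀ u : V, #{s ∈ P | u ∈ s} = k)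
    {Q : Finset V} (hQ : Q ∈ P) : t + (#P - 1) = t * k := by
  have hsum := sum_card_inter (s := Q) (B := P) fun u _ => hreg u
  have hrest : ∀ s ∈ P.erase Q, #(Q ∩ s) = 1 := fun s hs =>
    hint Q hQ s (mem_of_mem_erase hs) (ne_of_mem_erase hs).symm
  rwa [← add_sum_erase _ _ hQ, inter_self, hcard Q hQ, sum_congr rfl hrest, sum_const,
    card_erase_of_mem hQ, smul_eq_mul, mul_one] at hsum

end Finset

namespace IsCliquePartition

variable [DecidableEq V] {G : SimpleGraph V} {P : Finset (Finset V)}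

theorem card_filter_mem_and_mem_of_ne [DecidableRel G.Adj] (hP : IsCliquePartition G P)
    {u w : V} (huw : u ≠ w) :
    #{s ∈ P | u ∈ s ∧ w ∈ s} = if G.Adj u w then 1 else 0 := by
  split_ifs with hadj
  · obtain ⟨s, hs, huniq⟩ := hP.2 u w hadj
    refine card_eq_one.mpr ⟨s, ?_⟩
    ext s'
    simp only [mem_filter, mem_singleton]
    exact ⟨huniq s', fun h => h ▸ hs⟩
  · exact card_eq_zero.mpr <| filter_eq_empty_iff.mpr fun s hs ⟨hus, hws⟩ =>
      hadj (hP.1 s hs hus hws huw)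

theorem incidenceMatrix_mul_transpose [Fintype V] [DecidableRel G.Adj] (R : Type*) [Semiring R]
    {k : ℕ} (hP : IsCliquePartition G P) (hreg : ∀ u : V, #{s ∈ P | u ∈ s} = k) :
    incidenceMatrix R P * (incidenceMatrix R P)ᵀ = G.adjMatrix R + scalar V (k : R) := by
  ext u w
  rw [incidenceMatrix_mul_transpose_apply]
  obtain rfl | huw := eq_or_ne u w
  · simp [hreg, Matrix.natCast_apply]
  · simp [hP.card_filter_mem_and_mem_of_ne huw, huw, Matrix.natCast_apply]

theorem isRegularOfDegree [Fintype V] [DecidableRel G.Adj] {t k : ℕ}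
    (hP : IsCliquePartition G P) (hcard : ∀ s ∈ P, #s = t) (hreg : ∀ u : V, #{s ∈ P | u ∈ s} = k) :
    G.IsRegularOfDegree (k * (t - 1)) := by
  intro u
  have hnbr : G.neighborFinset u = {s ∈ P | u ∈ s}.biUnion (·.erase u) := by
    ext w
    simp only [mem_neighborFinset, mem_biUnion, mem_filter, mem_erase]
    constructor
    · intro hadj
      obtain ⟨s, ⟨hs, hus, hws⟩, -⟩ := hP.2 u w hadj
      exact ⟨s, ⟨hs, hus⟩, hadj.ne', hws⟩
    · rintro ⟨s, ⟨hs, hus⟩, hwu, hws⟩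
      exact hP.1 s hs hus hws hwu.symm
  have hdisj : (({s ∈ P | u ∈ s} : Finset _) : Set (Finset V)).PairwiseDisjoint (·.erase u) := by
    intro s hs s' hs' hss
    rw [mem_coe, mem_filter] at hs hs'
    refine disjoint_left.mpr fun w hw hw' => hss ?_
    obtain ⟨hwu, hws⟩ := mem_erase.mp hw
    have hadj : G.Adj u w := hP.1 s hs.1 hs.2 hws hwu.symm
    exact (hP.2 u w hadj).unique ⟨hs.1, hs.2, hws⟩ ⟨hs'.1, hs'.2, (mem_erase.mp hw').2⟩
  have hsize : ∀ s ∈ {s ∈ P | u ∈ s}, #(s.erase u) = t - 1 := fun s hs => by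
    rw [card_erase_of_mem (mem_filter.mp hs).2, hcard s (mem_filter.mp hs).1]
  rw [← card_neighborFinset_eq_degree, hnbr, card_biUnion hdisj, sum_congr rfl hsize, sum_const,
    hreg, smul_eq_mul]

end IsCliquePartition

/-- If `G` (on `n ≥ 1` vertices) has a `K_t`-decomposition
`𝒬 = {Q_1,…,Q_v}` with `|Q_i ∩ Q_j| = 1` for `i ≠ j` in which every vertex lies in
exactly `k` cliques, then the characteristic polynomial of the adjacency matrix of `G`
is `(x − k(t−1))·(x − (t−1−k))^{v−1}·(x + k)^{n−v}`; in particular `G` is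
`k(t−1)`-regular. -/
theorem charpoly_of_decomposition [Fintype V] [DecidableEq V] (G : SimpleGraph V)
    [DecidableRel G.Adj] (t k : ℕ) (ht : 2 ≤ t) (hk : 1 ≤ k)
    (hn : 0 < Fintype.card V)
    (P : Finset (Finset V)) (hP : IsCliquePartition G P)
    (hcard : ∀ s ∈ P, s.card = t)
    (hint : ∀ s₁ ∈ P, ∀ s₂ ∈ P, s₁ ≠ s₂ → (s₁ ∩ s₂).card = 1)
    (hreg : ∀ u : V, (P.filter (fun s => u ∈ s)).card = k) :
    (G.adjMatrix ℝ).charpoly =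
        (Polynomial.X - Polynomial.C ((k : ℝ) * ((t : ℝ) - 1))) *
          (Polynomial.X - Polynomial.C ((t : ℝ) - 1 - (k : ℝ))) ^ (P.card - 1) *
          (Polynomial.X + Polynomial.C (k : ℝ)) ^ (Fintype.card V - P.card) ∧
      G.IsRegularOfDegree (k * (t - 1)) := by
  set N := incidenceMatrix ℝ P
  obtain ⟨u⟩ := Fintype.card_pos_iff.mp hn
  obtain ⟨Q, hQ⟩ : P.Nonempty :=
    (card_pos.mp (hk.trans_eq (hreg u).symm)).mono (filter_subset _ _)
  have hv : (#P : ℝ) = t * k - t + 1 := by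
    have hcount := congrArg (Nat.cast (R := ℝ)) (card_add_card_sub_one_eq_mul hcard hint hreg hQ)
    push_cast [Nat.cast_sub (card_pos.mpr ⟨Q, hQ⟩)] at hcount
    linarith
  have hNtN : (Nᵀ * N).charpoly =
      (X - C ((t : ℝ) - 1)) ^ (#P - 1) * (X - C ((t : ℝ) - 1) - C (#P : ℝ)) := by
    have : Nonempty P := ⟨⟨Q, hQ⟩⟩
    rw [transpose_mul_incidenceMatrix_of_card_inter_eq_one ℝ hcard hint,
      charpoly_vecMulVec_one_add_scalar, Fintype.card_coe]
  have hvn : Fintype.card P ≤ Fintype.card V := by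
    refine card_le_card_of_eval_zero_charpoly_mul_ne_zero N Nᵀ ?_
    have ht' : (1 : ℝ) < t := by exact_mod_cast ht
    rw [hNtN]
    simp only [eval_mul, eval_pow, eval_sub, eval_X, eval_C]
    exact mul_ne_zero (pow_ne_zero _ (by linarith : (0 : ℝ) - (t - 1) < 0).ne)
      (by linarith [(#P).cast_nonneg (α := ℝ)] : (0 : ℝ) - (t - 1) - #P < 0).ne
  refine ⟨?_, hP.isRegularOfDegree hcard hreg⟩
  rw [eq_sub_of_add_eq (hP.incidenceMatrix_mul_transpose ℝ hreg).symm, charpoly_sub_scalar,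
    charpoly_mul_comm_of_le _ _ hvn, hNtN, Fintype.card_coe]
  simp only [mul_comp, pow_comp, sub_comp, X_comp, C_comp]
  simp only [hv, map_sub, map_add, map_mul, map_natCast, map_one]
  ring
end

section
/- Let v ≥ 4 and let T(v) be the triangular graph, i.e., the line graph of the complete graph K_v (vertices are the 2-element subsets of a v-element set, adjacent iff they intersect). Then cp(T(v)) = v, and moreover cp^{(v-1)}(T(v)) = v: the cliques Q_i = {pairs containing i}, for i = 1, …, v, form a minimum clique partition. -/
open Finset SimpleGraph Polynomial

variable {V : Type*}

/-- The triangular graph `T(v)`: the line graph of `K_v`, i.e. vertices are the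
`2`-element subsets of a `v`-element set, adjacent iff they intersect. -/
def triangularGraph (v : ℕ) : SimpleGraph {s : Finset (Fin v) // s.card = 2} where
  Adj a b := a ≠ b ∧ ((a : Finset (Fin v)) ∩ (b : Finset (Fin v))).Nonempty
  symm := by
    constructor
    rintro a b ⟨h₁, h₂⟩
    exact ⟨h₁.symm, by rwa [Finset.inter_comm]⟩
  loopless := by
    constructor
    rintro a ⟨h, -⟩
    exact h rfl

/-!
Counting ordered pairs of adjacent vertices, every clique partition `P` of a graph satisfies
`∑ s ∈ P, |s| (|s| - 1) = 2 |E|`. A clique of `T(v)` either consists of pairs through a common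
point, hence has at most `v - 1` vertices, or lies inside the three pairs of a triangle. For
`v ≥ 4` every clique therefore has at most `v - 1` vertices, while the `v` stars `Q_i` have exactly
`v - 1` vertices each and partition the edges; so no clique partition has fewer than `v` cliques.
-/

namespace Finset

variable {α : Type*} [DecidableEq α] {s : Finset α} {x y z : α}

lemma eq_pair_of_card_eq_two (hs : #s = 2) (hx : x ∈ s) (hy : y ∈ s) (hxy : x ≠ y) :
    s = {x, y} :=
  (eq_of_subset_of_card_le (insert_subset hx (singleton_subset_iff.mpr hy))
    (by rw [hs, card_pair hxy])).symm

lemma eq_side_of_inter_nonempty (hs : #s = 2) (hxy : x ≠ y) (hxz : x ≠ z) (hyz : y ≠ z)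
    (hxy' : (s ∩ {x, y}).Nonempty) (hxz' : (s ∩ {x, z}).Nonempty)
    (hyz' : (s ∩ {y, z}).Nonempty) :
    s = {x, y} ∨ s = {x, z} ∨ s = {y, z} := by
  obtain ⟨w, hw⟩ := hyz'
  simp only [mem_inter, mem_insert, mem_singleton] at hw
  by_cases hx : x ∈ s
  · rcases hw with ⟨hws, rfl | rfl⟩
    · exact .inl (eq_pair_of_card_eq_two hs hx hws hxy)
    · exact .inr (.inl (eq_pair_of_card_eq_two hs hx hws hxz))
  · obtain ⟨u, hu⟩ := hxy'
    obtain ⟨u', hu'⟩ := hxz'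
    simp only [mem_inter, mem_insert, mem_singleton] at hu hu'
    have hy : y ∈ s := by rcases hu with ⟨hus, rfl | rfl⟩ <;> tauto
    have hz : z ∈ s := by rcases hu' with ⟨hus, rfl | rfl⟩ <;> tauto
    exact .inr (.inr (eq_pair_of_card_eq_two hs hy hz hyz))

end Finset

namespace IsCliquePartition

variable [DecidableEq V] {G : SimpleGraph V} {P P₀ : Finset (Finset V)}

lemma pairwiseDisjoint_offDiag (hP : IsCliquePartition G P) :
    (P : Set (Finset V)).PairwiseDisjoint offDiag := by
  intro s hs t ht hst
  refine Finset.disjoint_left.mpr fun ⟨u, w⟩ hus hut => hst ?_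
  rw [mem_offDiag] at hus hut
  obtain ⟨r, -, hr⟩ := hP.2 u w (hP.1 s hs hus.1 hus.2.1 hus.2.2)
  exact (hr s ⟨hs, hus.1, hus.2.1⟩).trans (hr t ⟨ht, hut.1, hut.2.1⟩).symm

lemma mem_biUnion_offDiag (hP : IsCliquePartition G P) {p : V × V} :
    p ∈ P.biUnion offDiag ↔ G.Adj p.1 p.2 := by
  simp only [mem_biUnion, mem_offDiag]
  constructor
  · rintro ⟨s, hs, hu, hw, huw⟩
    exact hP.1 s hs hu hw huw
  · intro hadj
    obtain ⟨s, ⟨hs, hu, hw⟩, -⟩ := hP.2 p.1 p.2 hadj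
    exact ⟨s, hs, hu, hw, hadj.ne⟩

/-- Both sums count the ordered pairs of adjacent vertices. -/
lemma sum_card_offDiag_eq (hP₀ : IsCliquePartition G P₀) (hP : IsCliquePartition G P) :
    ∑ s ∈ P₀, #s.offDiag = ∑ s ∈ P, #s.offDiag := by
  rw [← card_biUnion hP₀.pairwiseDisjoint_offDiag, ← card_biUnion hP.pairwiseDisjoint_offDiag]
  congr 1
  ext p
  rw [hP₀.mem_biUnion_offDiag, hP.mem_biUnion_offDiag]

lemma card_le_card {k : ℕ} (hk : 2 ≤ k) (hP₀ : IsCliquePartition G P₀)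
    (hP : IsCliquePartition G P) (hP₀k : ∀ s ∈ P₀, #s = k) (hPk : ∀ s ∈ P, #s ≤ k) :
    #P₀ ≤ #P := by
  have hoff (s : Finset V) : #s.offDiag = #s * (#s - 1) := by
    rw [offDiag_card, Nat.mul_sub_one]
  refine Nat.le_of_mul_le_mul_right ?_ (Nat.mul_pos (by omega) (by omega) : 0 < k * (k - 1))
  calc #P₀ * (k * (k - 1)) = ∑ s ∈ P₀, #s.offDiag := by
        rw [sum_congr rfl fun s hs => by rw [hoff, hP₀k s hs], sum_const, smul_eq_mul]
    _ = ∑ s ∈ P, #s.offDiag := hP₀.sum_card_offDiag_eq hP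
    _ ≤ ∑ _s ∈ P, k * (k - 1) := sum_le_sum fun s hs => by
        rw [hoff]; gcongr <;> exact hPk s hs
    _ = #P * (k * (k - 1)) := by rw [sum_const, smul_eq_mul]

end IsCliquePartition

namespace triangularGraph

variable {v : ℕ}

def star (i : Fin v) : Finset {s : Finset (Fin v) // s.card = 2} :=
  univ.filter fun s => i ∈ (s : Finset (Fin v))

@[simp]
lemma mem_star {i : Fin v} {s : {s : Finset (Fin v) // s.card = 2}} :
    s ∈ star i ↔ i ∈ (s : Finset (Fin v)) := by
  simp [star]

lemma eq_of_mem_of_mem {a b : {s : Finset (Fin v) // s.card = 2}} {x y : Fin v} (hxy : x ≠ y)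
    (hxa : x ∈ a.1) (hya : y ∈ a.1) (hxb : x ∈ b.1) (hyb : y ∈ b.1) : a = b :=
  Subtype.ext ((eq_pair_of_card_eq_two a.2 hxa hya hxy).trans
    (eq_pair_of_card_eq_two b.2 hxb hyb hxy).symm)

lemma card_star (i : Fin v) : #(star i) = v - 1 := by
  have hcard : #(univ.erase i) = v - 1 := by simp
  rw [← hcard]
  symm
  refine card_bij (fun j hj => ⟨{i, j}, card_pair (ne_of_mem_erase hj).symm⟩)
    (fun j _ => by simp) (fun j hj j' hj' h => ?_) (fun s hs => ?_)
  · have hval : ({i, j} : Finset (Fin v)) = {i, j'} := congrArg Subtype.val h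
    have hmem : j ∈ ({i, j'} : Finset (Fin v)) := hval ▸ mem_insert_of_mem (mem_singleton_self j)
    simpa [ne_of_mem_erase hj] using hmem
  · obtain ⟨j, hj, hji⟩ := exists_mem_ne (by rw [s.2]; norm_num) i
    exact ⟨j, mem_erase.mpr ⟨hji, mem_univ j⟩,
      Subtype.ext (eq_pair_of_card_eq_two s.2 (mem_star.mp hs) hj hji.symm).symm⟩

lemma star_injective (hv : 3 ≤ v) : Function.Injective (star (v := v)) := by
  intro i j hij
  obtain ⟨k, hk⟩ : ({i, j}ᶜ : Finset (Fin v)).Nonempty := by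
    rw [← card_pos, card_compl, Fintype.card_fin]
    have := card_le_two (a := i) (b := j)
    omega
  simp only [mem_compl, mem_insert, mem_singleton, not_or] at hk
  have hik : (⟨{i, k}, card_pair (Ne.symm hk.1)⟩ : {s : Finset (Fin v) // s.card = 2}) ∈ star j :=
    hij ▸ mem_star.mpr (mem_insert_self _ _)
  simp only [mem_star, mem_insert, mem_singleton] at hik
  tauto

lemma isClique_star (i : Fin v) : (triangularGraph v).IsClique (star i : Set _) :=
  fun _ ha _ hb hab => ⟨hab, i, mem_inter.mpr ⟨mem_star.mp ha, mem_star.mp hb⟩⟩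

lemma isCliquePartition_image_star :
    IsCliquePartition (triangularGraph v) (univ.image star) := by
  refine ⟨by simpa using isClique_star, fun a b hab => ?_⟩
  obtain ⟨hne, x, hx⟩ := hab
  rw [mem_inter] at hx
  refine ⟨star x, ⟨mem_image_of_mem _ (mem_univ x), mem_star.mpr hx.1, mem_star.mpr hx.2⟩, ?_⟩
  rintro _ ⟨hs, ha, hb⟩
  obtain ⟨j, -, rfl⟩ := mem_image.mp hs
  by_contra hjx
  exact hne (eq_of_mem_of_mem (fun h => hjx (congrArg star h)) (mem_star.mp ha) hx.1
    (mem_star.mp hb) hx.2)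

variable {S : Finset {s : Finset (Fin v) // s.card = 2}}

lemma inter_nonempty_of_isClique (hS : (triangularGraph v).IsClique (S : Set _)) {a b}
    (ha : a ∈ S) (hb : b ∈ S) : ((a : Finset (Fin v)) ∩ b).Nonempty := by
  obtain rfl | hab := eq_or_ne a b
  · rw [inter_self, ← card_pos, a.2]
    norm_num
  · exact (hS ha hb hab).2

lemma exists_subset_star_or_card_le_three (hS : (triangularGraph v).IsClique (S : Set _)) :
    (∃ x, S ⊆ star x) ∨ #S ≤ 3 := by
  refine or_iff_not_imp_left.mpr fun hstar => ?_
  simp only [not_exists] at hstar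
  by_contra! hS3
  obtain ⟨a, ha, b, hb, hab⟩ := one_lt_card.mp (by omega : 1 < #S)
  obtain ⟨x, hx⟩ := (hS ha hb hab).2
  obtain ⟨c, hc, hxc⟩ := not_subset.mp (hstar x)
  obtain ⟨y, hy⟩ := inter_nonempty_of_isClique hS ha hc
  obtain ⟨z, hz⟩ := inter_nonempty_of_isClique hS hb hc
  rw [mem_star] at hxc
  rw [mem_inter] at hx hy hz
  have hxy : x ≠ y := fun h => hxc (h ▸ hy.2)
  have hxz : x ≠ z := fun h => hxc (h ▸ hz.2)
  have hyz : y ≠ z := by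
    rintro rfl
    exact hab (eq_of_mem_of_mem hxy hx.1 hy.1 hx.2 hz.1)
  have ha' := eq_pair_of_card_eq_two a.2 hx.1 hy.1 hxy
  have hb' := eq_pair_of_card_eq_two b.2 hx.2 hz.1 hxz
  have hc' := eq_pair_of_card_eq_two c.2 hy.2 hz.2 hyz
  have hsub : S ⊆ {a, b, c} := by
    intro d hd
    have hside := eq_side_of_inter_nonempty d.2 hxy hxz hyz
      (ha' ▸ inter_nonempty_of_isClique hS hd ha) (hb' ▸ inter_nonempty_of_isClique hS hd hb)
      (hc' ▸ inter_nonempty_of_isClique hS hd hc)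
    simp only [mem_insert, mem_singleton]
    rcases hside with h | h | h
    · exact .inl (Subtype.ext (h.trans ha'.symm))
    · exact .inr (.inl (Subtype.ext (h.trans hb'.symm)))
    · exact .inr (.inr (Subtype.ext (h.trans hc'.symm)))
  exact ((card_le_card hsub).trans card_le_three).not_gt hS3

lemma card_le_of_isClique (hv : 4 ≤ v) (hS : (triangularGraph v).IsClique (S : Set _)) :
    #S ≤ v - 1 := by
  obtain ⟨x, hx⟩ | h3 := exists_subset_star_or_card_le_three hS
  · exact (card_le_card hx).trans (card_star x).le
  · omega

end triangularGraph

/-- For `v ≥ 4`, `cp(T(v)) = v` and `cp^{(v−1)}(T(v)) = v`; the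
cliques `Q_i = {pairs containing i}`, `i = 1,…,v`, form a minimum clique partition. -/
theorem cp_triangularGraph (v : ℕ) (hv : 4 ≤ v)
    (Q : Fin v → Finset {s : Finset (Fin v) // s.card = 2})
    (hQ : ∀ i : Fin v, Q i = Finset.univ.filter
      (fun s : {s : Finset (Fin v) // s.card = 2} => i ∈ (s : Finset (Fin v)))) :
    cp (triangularGraph v) = v ∧ cpT (triangularGraph v) (v - 1) = v ∧
      IsCliquePartition (triangularGraph v) (Finset.univ.image Q) ∧
      (Finset.univ.image Q).card = v := by
  obtain rfl : Q = triangularGraph.star := funext hQ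
  have hpart : IsCliquePartition (triangularGraph v) (univ.image triangularGraph.star) :=
    triangularGraph.isCliquePartition_image_star
  have hcard : #(univ.image (triangularGraph.star (v := v))) = v := by
    rw [card_image_of_injective _ (triangularGraph.star_injective (by omega)), card_univ,
      Fintype.card_fin]
  have hsize : ∀ s ∈ univ.image (triangularGraph.star (v := v)), #s = v - 1 := by
    simp [triangularGraph.card_star]
  have hmin : ∀ P, IsCliquePartition (triangularGraph v) P → v ≤ #P := fun P hP =>
    hcard.ge.trans <| hpart.card_le_card (by omega) hP hsize fun s hs =>
      triangularGraph.card_le_of_isClique hv (hP.1 s hs)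
  refine ⟨?_, ?_, hpart, hcard⟩
  · exact IsLeast.csInf_eq ⟨⟨_, hpart, hcard⟩, fun m ⟨P, hP, hm⟩ => hm ▸ hmin P hP⟩
  · exact IsLeast.csInf_eq
      ⟨⟨_, hpart, fun s hs => (hsize s hs).le, hcard⟩, fun m ⟨P, hP, _, hm⟩ => hm ▸ hmin P hP⟩
end

section
/- Let k ≥ 2 and suppose there exists an affine plane of order k, i.e., a family of k-element blocks of a k²-element point set such that every pair of distinct points lies in exactly one block. Then the complete (k+1)-partite graph K_{(k+1)×k} with all parts of size k satisfies cp(K_{(k+1)×k}) = k². -/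
open Finset SimpleGraph Polynomial

variable {V : Type*}

section Design
variable {k : ℕ} {D : Finset (Finset (Fin (k ^ 2)))}

/-- Two distinct blocks meet in at most one point. -/
lemma block_inter (hpair : ∀ p q : Fin (k ^ 2), p ≠ q → ∃! b, b ∈ D ∧ p ∈ b ∧ q ∈ b)
    {b b' : Finset (Fin (k^2))} (hb : b ∈ D) (hb' : b' ∈ D) (hne : b ≠ b')
    {p q : Fin (k^2)} (hpb : p ∈ b) (hpb' : p ∈ b') (hqb : q ∈ b) (hqb' : q ∈ b') :
    p = q := by
  by_contra h
  obtain ⟨c, -, hu⟩ := hpair p q h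
  exact hne ((hu b ⟨hb, hpb, hqb⟩).trans (hu b' ⟨hb', hpb', hqb'⟩).symm)

/-- Number of lines through any point is `k+1`. -/
lemma lines_through (hk : 2 ≤ k) (hcard : ∀ b ∈ D, b.card = k)
    (hpair : ∀ p q : Fin (k ^ 2), p ≠ q → ∃! b, b ∈ D ∧ p ∈ b ∧ q ∈ b)
    (p : Fin (k^2)) : (D.filter (p ∈ ·)).card = k + 1 := by
  set L := D.filter (p ∈ ·) with hL
  have hdisj : ∀ b ∈ L, ∀ b' ∈ L, b ≠ b' → Disjoint (b.erase p) (b'.erase p) := by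
    intro b hb b' hb' hne
    simp only [hL, mem_filter] at hb hb'
    rw [Finset.disjoint_left]
    intro q hq hq'
    have h1 := Finset.mem_erase.1 hq
    have h2 := Finset.mem_erase.1 hq'
    exact h1.1 (block_inter hpair hb.1 hb'.1 hne hb.2 hb'.2 h1.2 h2.2).symm
  have hbu : L.biUnion (fun b => b.erase p) = Finset.univ.erase p := by
    ext q
    simp only [mem_biUnion, mem_erase, mem_univ, and_true, hL, mem_filter]
    constructor
    · rintro ⟨b, ⟨-, -⟩, hq, -⟩; exact hq
    · intro hq
      obtain ⟨b, ⟨hbD, hpb, hqb⟩, -⟩ := hpair p q (Ne.symm hq)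
      exact ⟨b, ⟨hbD, hpb⟩, hq, hqb⟩
  have hcount : L.card * (k - 1) = k^2 - 1 := by
    have := Finset.card_biUnion hdisj
    rw [hbu] at this
    rw [Finset.card_erase_of_mem (mem_univ p)] at this
    simp only [card_univ, Fintype.card_fin] at this
    rw [this, Finset.sum_congr rfl (fun b hb => ?_), Finset.sum_const, smul_eq_mul]
    · simp only [hL, mem_filter] at hb
      rw [Finset.card_erase_of_mem hb.2, hcard b hb.1]
  have harith : k^2 - 1 = (k+1) * (k-1) := by
    have h1 : 1 ≤ k := by omega
    have h2 : 1 ≤ k^2 := Nat.one_le_pow _ _ (by omega)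
    zify [h1, h2]; ring
  rw [harith] at hcount
  exact Nat.eq_of_mul_eq_mul_right (by omega) hcount

/-- Playfair: through a point off a line there is exactly one disjoint (parallel) line. -/
lemma playfair (hk : 2 ≤ k) (hcard : ∀ b ∈ D, b.card = k)
    (hpair : ∀ p q : Fin (k ^ 2), p ≠ q → ∃! b, b ∈ D ∧ p ∈ b ∧ q ∈ b)
    {b : Finset (Fin (k^2))} (hb : b ∈ D) {p : Fin (k^2)} (hp : p ∉ b) :
    ∃! b', b' ∈ D ∧ p ∈ b' ∧ Disjoint b b' := by
  classical
  set L := D.filter (p ∈ ·) with hL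
  have hLmem : ∀ {x}, x ∈ L ↔ x ∈ D ∧ p ∈ x := by intro x; simp [hL]
  have hLb : ∀ b' ∈ L, b' ≠ b := fun b' hb' h => hp (h ▸ (hLmem.1 hb').2)
  have hdisj : ∀ x ∈ L, ∀ y ∈ L, x ≠ y → Disjoint (x ∩ b) (y ∩ b) := by
    intro x hx y hy hne
    rw [Finset.disjoint_left]
    intro q hq hq'
    simp only [mem_inter] at hq hq'
    have hpq : p ≠ q := fun h => hp (h ▸ hq.2)
    exact hpq (block_inter hpair (hLmem.1 hx).1 (hLmem.1 hy).1 hne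
      (hLmem.1 hx).2 (hLmem.1 hy).2 hq.1 hq'.1)
  have hbu : L.biUnion (fun x => x ∩ b) = b := by
    ext q
    simp only [mem_biUnion, mem_inter]
    constructor
    · rintro ⟨x, -, -, h⟩; exact h
    · intro hq
      have hpq : p ≠ q := fun h => hp (h ▸ hq)
      obtain ⟨x, ⟨hxD, hpx, hqx⟩, -⟩ := hpair p q hpq
      exact ⟨x, hLmem.2 ⟨hxD, hpx⟩, hqx, hq⟩
  have hone : ∀ x ∈ L, ¬ Disjoint b x → (x ∩ b).card = 1 := by
    intro x hx hnd
    have hne : (x ∩ b).Nonempty := by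
      rw [Finset.not_disjoint_iff] at hnd
      obtain ⟨q, hq1, hq2⟩ := hnd
      exact ⟨q, mem_inter.2 ⟨hq2, hq1⟩⟩
    have hle : (x ∩ b).card ≤ 1 := by
      rw [Finset.card_le_one]
      intro q hq r hr
      simp only [mem_inter] at hq hr
      exact block_inter hpair (hLmem.1 hx).1 hb (hLb x hx) hq.1 hq.2 hr.1 hr.2
    have := Finset.card_pos.2 hne
    omega
  have hsum : ∑ x ∈ L, (x ∩ b).card = k := by
    rw [← Finset.card_biUnion hdisj, hbu, hcard b hb]
  have hMcard : (L.filter (fun x => ¬ Disjoint b x)).card = k := by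
    have key : (L.filter (fun x => ¬ Disjoint b x)).card = ∑ x ∈ L, (x ∩ b).card := by
      rw [← Finset.sum_filter_add_sum_filter_not L (fun x => ¬ Disjoint b x) (fun x => (x ∩ b).card)]
      have h0 : ∑ x ∈ L.filter (fun x => ¬¬ Disjoint b x), (x ∩ b).card = 0 := by
        apply Finset.sum_eq_zero
        intro x hx
        simp only [mem_filter, not_not] at hx
        rw [Finset.card_eq_zero, ← Finset.disjoint_iff_inter_eq_empty]
        exact hx.2.symm
      rw [h0, add_zero]
      rw [Finset.sum_congr rfl (fun x hx => hone x (mem_filter.1 hx).1 (mem_filter.1 hx).2),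
        Finset.sum_const, smul_eq_mul, mul_one]
    rw [key, hsum]
  have hLcard : L.card = k + 1 := lines_through hk hcard hpair p
  have hNcard : (L.filter (fun x => Disjoint b x)).card = 1 := by
    have := Finset.card_filter_add_card_filter_not (s := L)
      (p := fun x => Disjoint b x)
    omega
  obtain ⟨b', hb'⟩ := Finset.card_eq_one.1 hNcard
  have hb'mem : b' ∈ L.filter (fun x => Disjoint b x) := hb' ▸ mem_singleton_self b'
  simp only [mem_filter] at hb'mem
  refine ⟨b', ⟨(hLmem.1 hb'mem.1).1, (hLmem.1 hb'mem.1).2, hb'mem.2⟩, ?_⟩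
  rintro y ⟨hyD, hpy, hyd⟩
  have : y ∈ L.filter (fun x => Disjoint b x) := mem_filter.2 ⟨hLmem.2 ⟨hyD, hpy⟩, hyd⟩
  rw [hb', mem_singleton] at this
  exact this
/-- Parallelism. -/
def Par {α : Type*} (b b' : Finset α) : Prop := b = b' ∨ Disjoint b b'

instance {α : Type*} [DecidableEq α] (b b' : Finset α) : Decidable (Par b b') := by
  unfold Par; infer_instance

lemma par_refl {α : Type*} (b : Finset α) : Par b b := Or.inl rfl

lemma par_symm {α : Type*} {b b' : Finset α} (h : Par b b') : Par b' b := by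
  rcases h with h | h
  · exact Or.inl h.symm
  · exact Or.inr h.symm

/-- Through every point there is a unique line parallel to a given line. -/
lemma through_par (hk : 2 ≤ k) (hcard : ∀ b ∈ D, b.card = k)
    (hpair : ∀ p q : Fin (k ^ 2), p ≠ q → ∃! b, b ∈ D ∧ p ∈ b ∧ q ∈ b)
    {l0 : Finset (Fin (k^2))} (hl0 : l0 ∈ D) (q : Fin (k^2)) :
    ∃! l, l ∈ D ∧ q ∈ l ∧ Par l0 l := by
  by_cases hq : q ∈ l0
  · refine ⟨l0, ⟨hl0, hq, par_refl l0⟩, ?_⟩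
    rintro y ⟨hyD, hqy, (h | h)⟩
    · exact h.symm
    · exact absurd (Finset.disjoint_left.1 h hq) (fun h' => h' hqy)
  · obtain ⟨b', ⟨hb'D, hqb', hdisj⟩, hu⟩ := playfair hk hcard hpair hl0 hq
    refine ⟨b', ⟨hb'D, hqb', Or.inr hdisj⟩, ?_⟩
    rintro y ⟨hyD, hqy, (h | h)⟩
    · exact absurd (h ▸ hqy) hq
    · exact hu y ⟨hyD, hqy, h⟩

lemma par_trans (hk : 2 ≤ k) (hcard : ∀ b ∈ D, b.card = k)
    (hpair : ∀ p q : Fin (k ^ 2), p ≠ q → ∃! b, b ∈ D ∧ p ∈ b ∧ q ∈ b)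
    {b c d : Finset (Fin (k^2))} (hb : b ∈ D) (hc : c ∈ D) (hd : d ∈ D)
    (h1 : Par b c) (h2 : Par c d) : Par b d := by
  rcases h1 with rfl | h1
  · exact h2
  rcases h2 with rfl | h2
  · exact Or.inr h1
  by_cases hbd : b = d
  · exact Or.inl hbd
  right
  by_contra hnd
  rw [Finset.not_disjoint_iff] at hnd
  obtain ⟨q, hqb, hqd⟩ := hnd
  have hqc : q ∉ c := Finset.disjoint_left.1 h1 hqb
  obtain ⟨b', -, hu⟩ := playfair hk hcard hpair hc hqc
  exact hbd ((hu b ⟨hb, hqb, h1.symm⟩).trans (hu d ⟨hd, hqd, h2⟩).symm)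

lemma class_card (hk : 2 ≤ k) (hcard : ∀ b ∈ D, b.card = k)
    (hpair : ∀ p q : Fin (k ^ 2), p ≠ q → ∃! b, b ∈ D ∧ p ∈ b ∧ q ∈ b)
    {l0 : Finset (Fin (k^2))} (hl0 : l0 ∈ D) :
    (D.filter (fun l => Par l0 l)).card = k := by
  classical
  set C := D.filter (fun l => Par l0 l) with hC
  have hCmem : ∀ {x}, x ∈ C ↔ x ∈ D ∧ Par l0 x := by intro x; simp [hC]
  have hdisj : ∀ x ∈ C, ∀ y ∈ C, x ≠ y → Disjoint x y := by
    intro x hx y hy hne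
    have hpxy : Par x y := par_trans hk hcard hpair (hCmem.1 hx).1 hl0 (hCmem.1 hy).1
      (par_symm (hCmem.1 hx).2) (hCmem.1 hy).2
    rcases hpxy with h | h
    · exact absurd h hne
    · exact h
  have hbu : C.biUnion (fun x => x) = Finset.univ := by
    ext q
    simp only [mem_biUnion, mem_univ, iff_true]
    obtain ⟨l, ⟨hlD, hql, hpar⟩, -⟩ := through_par hk hcard hpair hl0 q
    exact ⟨l, hCmem.2 ⟨hlD, hpar⟩, hql⟩
  have := Finset.card_biUnion hdisj
  rw [hbu] at this
  simp only [card_univ, Fintype.card_fin, id] at this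
  have hsum : ∑ u ∈ C, u.card = C.card * k := by
    rw [Finset.sum_congr rfl (fun x hx => hcard x (hCmem.1 hx).1), Finset.sum_const, smul_eq_mul]
  rw [hsum] at this
  have hk0 : 0 < k := by omega
  nlinarith [this]


lemma adj_iff {k : ℕ} {v w : (i : Fin (k+1)) × Fin k} :
    (completeMultipartiteGraph (fun _ : Fin (k + 1) => Fin k)).Adj v w ↔ v.1 ≠ w.1 := by
  simp [completeMultipartiteGraph, SimpleGraph.comap_adj, SimpleGraph.top_adj]

lemma lower_bound (k : ℕ) (hk : 2 ≤ k) (P : Finset (Finset ((i : Fin (k+1)) × Fin k)))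
    (hP : IsCliquePartition (completeMultipartiteGraph (fun _ : Fin (k + 1) => Fin k)) P) :
    k ^ 2 ≤ P.card := by
  classical
  obtain ⟨hclique, hedge⟩ := hP
  have hsize : ∀ s ∈ P, s.card ≤ k + 1 := by
    intro s hs
    have := Finset.card_le_card_of_injOn (f := Sigma.fst) (s := s)
      (t := (Finset.univ : Finset (Fin (k+1)))) (fun a _ => mem_univ _) ?_
    · simpa using this
    · intro v hv w hw hvw
      by_contra hne
      exact (adj_iff.1 (hclique s hs hv hw hne)) hvw
  have hdeg : ∀ v : (i : Fin (k+1)) × Fin k, k ≤ (P.filter (fun s => v ∈ s)).card := by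
    intro v
    set N := Finset.univ.filter (fun u : (i : Fin (k+1)) × Fin k => u.1 ≠ v.1) with hN
    have hNcard : N.card = k * k := by
      have h1 : (Finset.univ.filter (fun u : (i : Fin (k+1)) × Fin k => u.1 = v.1))
          = Finset.univ.image (fun b : Fin k => (⟨v.1, b⟩ : (i : Fin (k+1)) × Fin k)) := by
        ext u
        simp only [mem_filter, mem_univ, true_and, mem_image]
        constructor
        · rintro h
          exact ⟨u.2, by cases u; cases h; rfl⟩
        · rintro ⟨b, -, rfl⟩; rfl
      have h2 : (Finset.univ.filter (fun u : (i : Fin (k+1)) × Fin k => u.1 = v.1)).card = k := by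
        rw [h1, Finset.card_image_of_injective _ (fun a b h => by injection h), card_univ,
          Fintype.card_fin]
      have h3 := Finset.card_filter_add_card_filter_not (s := Finset.univ)
        (p := fun u : (i : Fin (k+1)) × Fin k => u.1 = v.1)
      have h4 : (Finset.univ : Finset ((i : Fin (k+1)) × Fin k)).card = (k+1) * k := by
        simp [card_univ, Fintype.card_sigma]
      have h5 : (k+1)*k = k*k + k := by ring
      have h6 : (Finset.univ.filter (fun u : (i : Fin (k+1)) × Fin k => ¬ u.1 = v.1)) = N := by
        simp only [hN, ne_eq]
      rw [h6] at h3
      omega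
    have hdisj : ∀ s ∈ P.filter (fun s => v ∈ s), ∀ t ∈ P.filter (fun s => v ∈ s), s ≠ t →
        Disjoint (s.erase v) (t.erase v) := by
      intro s hs t ht hst
      simp only [mem_filter] at hs ht
      rw [Finset.disjoint_left]
      intro u hu hu'
      have hus := Finset.mem_erase.1 hu
      have hut := Finset.mem_erase.1 hu'
      have hadj : (completeMultipartiteGraph (fun _ : Fin (k + 1) => Fin k)).Adj v u :=
        hclique s hs.1 hs.2 hus.2 (fun h => hus.1 h.symm)
      obtain ⟨c, -, hu⟩ := hedge v u hadj
      exact hst ((hu s ⟨hs.1, hs.2, hus.2⟩).trans (hu t ⟨ht.1, ht.2, hut.2⟩).symm)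
    have hbu : (P.filter (fun s => v ∈ s)).biUnion (fun s => s.erase v) = N := by
      ext u
      simp only [mem_biUnion, mem_filter, mem_univ, true_and, hN]
      constructor
      · rintro ⟨s, ⟨hsP, hvs⟩, hu⟩
        have hus := Finset.mem_erase.1 hu
        exact adj_iff.1 (hclique s hsP hus.2 hvs (fun h => hus.1 h)) 
      · intro hu
        have hadj : (completeMultipartiteGraph (fun _ : Fin (k + 1) => Fin k)).Adj v u :=
          adj_iff.2 (Ne.symm hu)
        obtain ⟨s, ⟨hsP, hvs, hus⟩, -⟩ := hedge v u hadj
        exact ⟨s, ⟨hsP, hvs⟩, Finset.mem_erase.2 ⟨fun h => hu (congrArg Sigma.fst h), hus⟩⟩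
    have hcount := Finset.card_biUnion hdisj
    rw [hbu, hNcard] at hcount
    have hle : ∑ s ∈ P.filter (fun s => v ∈ s), (s.erase v).card
        ≤ (P.filter (fun s => v ∈ s)).card * k := by
      rw [← smul_eq_mul, ← Finset.sum_const]
      apply Finset.sum_le_sum
      intro s hs
      simp only [mem_filter] at hs
      have := hsize s hs.1
      have := Finset.card_erase_of_mem hs.2
      omega
    have : k * k ≤ (P.filter (fun s => v ∈ s)).card * k := by omega
    exact Nat.le_of_mul_le_mul_right this (by omega)
  have hdc : ∑ v : (i : Fin (k+1)) × Fin k, (P.filter (fun s => v ∈ s)).card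
      = ∑ s ∈ P, s.card := by
    simp only [Finset.card_filter]
    rw [Finset.sum_comm]
    apply Finset.sum_congr rfl
    intro s hs
    simp [Finset.card_filter]
  have h1 : k * ((k+1) * k) ≤ ∑ s ∈ P, s.card := by
    rw [← hdc]
    calc k * ((k+1)*k) = ∑ _v : (i : Fin (k+1)) × Fin k, k := by
          simp [Finset.sum_const, card_univ, Fintype.card_sigma]; ring
      _ ≤ _ := Finset.sum_le_sum (fun v _ => hdeg v)
  have h2 : ∑ s ∈ P, s.card ≤ P.card * (k+1) := by
    rw [← smul_eq_mul, ← Finset.sum_const]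
    exact Finset.sum_le_sum hsize
  have : k^2 * (k+1) ≤ P.card * (k+1) := by nlinarith
  exact Nat.le_of_mul_le_mul_right this (by omega)

lemma upper_bound (k : ℕ) (hk : 2 ≤ k) (D : Finset (Finset (Fin (k ^ 2))))
    (hcard : ∀ b ∈ D, b.card = k)
    (hpair : ∀ p q : Fin (k ^ 2), p ≠ q → ∃! b, b ∈ D ∧ p ∈ b ∧ q ∈ b) :
    ∃ P : Finset (Finset ((i : Fin (k+1)) × Fin k)),
      IsCliquePartition (completeMultipartiteGraph (fun _ : Fin (k+1) => Fin k)) P ∧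
      P.card ≤ k ^ 2 := by
  classical
  have hk2 : 0 < k ^ 2 := by positivity
  set p0 : Fin (k^2) := ⟨0, hk2⟩ with hp0
  set L0 := D.filter (p0 ∈ ·) with hL0
  have hL0card : L0.card = k + 1 := lines_through hk hcard hpair p0
  let e : Fin (k+1) ≃ {x // x ∈ L0} := (Finset.equivFinOfCardEq hL0card).symm
  have hl0D : ∀ i : Fin (k+1), ((e i : {x // x ∈ L0}) : Finset (Fin (k^2))) ∈ D ∧
      p0 ∈ ((e i : {x // x ∈ L0}) : Finset (Fin (k^2))) := by
    intro i
    exact mem_filter.mp (e i).2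
  let l0 : Fin (k+1) → Finset (Fin (k^2)) := fun i => (e i : {x // x ∈ L0})
  have hl0inj : ∀ i j, l0 i = l0 j → i = j := by
    intro i j h
    exact e.injective (Subtype.ext h)
  have hl0npar : ∀ i j, i ≠ j → ¬ Par (l0 i) (l0 j) := by
    intro i j hij hpar
    rcases hpar with h | h
    · exact hij (hl0inj i j h)
    · exact Finset.disjoint_left.1 h (hl0D i).2 (hl0D j).2
  let f : ∀ i : Fin (k+1), Fin k ≃ {x // x ∈ D.filter (fun l => Par (l0 i) l)} :=
    fun i => (Finset.equivFinOfCardEq (class_card hk hcard hpair (hl0D i).1)).symm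
  let line : ((i : Fin (k+1)) × Fin k) → Finset (Fin (k^2)) := fun v => (f v.1 v.2 : Finset (Fin (k^2)))
  have hlineC : ∀ v, line v ∈ D ∧ Par (l0 v.1) (line v) := by
    intro v
    have := (f v.1 v.2).2
    rw [mem_filter] at this
    exact this
  have hlineinj : ∀ i (a b : Fin k), line ⟨i, a⟩ = line ⟨i, b⟩ → a = b := by
    intro i a b h
    exact (f i).injective (Subtype.ext h)
  have hnotpar : ∀ v w : (i : Fin (k+1)) × Fin k, v.1 ≠ w.1 → ¬ Par (line v) (line w) := by
    intro v w hne hpar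
    apply hl0npar v.1 w.1 hne
    have h1 := (hlineC v).2
    have h2 := (hlineC w).2
    exact par_trans hk hcard hpair (hl0D v.1).1 (hlineC w).1 (hl0D w.1).1
      (par_trans hk hcard hpair (hl0D v.1).1 (hlineC v).1 (hlineC w).1 h1 hpar)
      (par_symm h2)
  have huniq : ∀ (i : Fin (k+1)) (a b : Fin k) (q : Fin (k^2)),
      q ∈ line ⟨i, a⟩ → q ∈ line ⟨i, b⟩ → a = b := by
    intro i a b q hqa hqb
    apply hlineinj i a b
    obtain ⟨l, -, hu⟩ := through_par hk hcard hpair (hl0D i).1 q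
    exact (hu _ ⟨(hlineC ⟨i,a⟩).1, hqa, (hlineC ⟨i,a⟩).2⟩).trans
      (hu _ ⟨(hlineC ⟨i,b⟩).1, hqb, (hlineC ⟨i,b⟩).2⟩).symm
  let Cq : Fin (k^2) → Finset ((i : Fin (k+1)) × Fin k) :=
    fun q => Finset.univ.filter (fun v => q ∈ line v)
  refine ⟨Finset.univ.image Cq, ⟨?_, ?_⟩, ?_⟩
  · rintro s hs
    obtain ⟨q, -, rfl⟩ := Finset.mem_image.1 hs
    intro v hv w hw hvw
    simp only [Cq, Finset.mem_coe, mem_filter, mem_univ, true_and] at hv hw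
    rw [adj_iff]
    rintro h
    obtain ⟨i, a⟩ := v
    obtain ⟨j, b⟩ := w
    simp only at h
    subst h
    exact hvw (by rw [huniq i a b q hv hw])
  · intro v w hadj
    have hne : v.1 ≠ w.1 := adj_iff.1 hadj
    have hnp := hnotpar v w hne
    rw [Par, not_or, Finset.not_disjoint_iff] at hnp
    obtain ⟨hlne, q, hqv, hqw⟩ := hnp
    refine ⟨Cq q, ⟨Finset.mem_image_of_mem Cq (mem_univ q), ?_, ?_⟩, ?_⟩
    · simp only [Cq, mem_filter, mem_univ, true_and]; exact hqv
    · simp only [Cq, mem_filter, mem_univ, true_and]; exact hqw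
    · rintro s ⟨hs, hvs, hws⟩
      obtain ⟨q', -, rfl⟩ := Finset.mem_image.1 hs
      simp only [Cq, mem_filter, mem_univ, true_and] at hvs hws
      have : q' = q := block_inter hpair (hlineC v).1 (hlineC w).1 hlne hvs hws hqv hqw
      rw [this]
  · calc (Finset.univ.image Cq).card ≤ (Finset.univ : Finset (Fin (k^2))).card :=
          Finset.card_image_le
    _ = k ^ 2 := by simp

/-- If there exists an affine plane of order `k ≥ 2` (a `2-(k²,k,1)`
design), then the complete `(k+1)`-partite graph `K_{(k+1)×k}` with all parts of size
`k` has clique partition number `k²`. -/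
theorem cp_completeMultipartite (k : ℕ) (hk : 2 ≤ k)
    (hplane : ∃ D : Finset (Finset (Fin (k ^ 2))), (∀ b ∈ D, b.card = k) ∧
      ∀ p q : Fin (k ^ 2), p ≠ q → ∃! b, b ∈ D ∧ p ∈ b ∧ q ∈ b) :
    cp (completeMultipartiteGraph (fun _ : Fin (k + 1) => Fin k)) = k ^ 2 := by
  classical
  obtain ⟨D, hcard, hpair⟩ := hplane
  obtain ⟨P, hP, hPle⟩ := upper_bound k hk D hcard hpair
  rw [cp]
  have hne : {m | ∃ Q : Finset (Finset ((i : Fin (k+1)) × Fin k)),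
      IsCliquePartition (completeMultipartiteGraph (fun _ : Fin (k + 1) => Fin k)) Q ∧
      Q.card = m}.Nonempty := ⟨P.card, P, hP, rfl⟩
  have hle := Nat.sInf_le (s := {m | ∃ Q : Finset (Finset ((i : Fin (k+1)) × Fin k)),
      IsCliquePartition (completeMultipartiteGraph (fun _ : Fin (k + 1) => Fin k)) Q ∧
      Q.card = m}) ⟨P, hP, rfl⟩
  obtain ⟨Q, hQ, hQc⟩ := Nat.sInf_mem hne
  have hge := lower_bound k hk Q hQ
  omega

end Design
end
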